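/- arXiv:2605.21920 — 8 statements merged into one kernel-verified Lean document; each statement's English description precedes it below -/
import Mathlib

section
/- Let H be a finite hypergraph (a finite family E of nonempty finite subsets of a finite vertex set V). If sigma is an ordering of V minimizing the total cost sum over edges e of min_{v in e} sigma(v), then the effective coverages satisfy r_sigma(1) >= r_sigma(2), where r_sigma(i) is the number of edges e with min_{v in e} sigma(v) = i. -/
open Finset

/-- Position at which hyperedge `e` is first hit by the ordering `σ`. -/
noncomputable def firstHit {α : Type*} (σ : α → ℕ) (e : Finset α) : ℕ :=
  sInf (σ '' ↑e)

/-- Total cost of an ordering: each edge pays the position of its first vertex. -/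
noncomputable def totalCost {α : Type*} (E : Finset (Finset α)) (σ : α → ℕ) : ℕ :=
  ∑ e ∈ E, firstHit σ e

open scoped Classical in
/-- Effective coverage of position `i`: the number of edges first hit at `i`. -/
noncomputable def coverage {α : Type*} (E : Finset (Finset α)) (σ : α → ℕ) (i : ℕ) : ℕ :=
  (E.filter fun e => firstHit σ e = i).card

/-- An ordering of the vertex set `V`: a bijection onto positions `{1, ..., |V|}`. -/
def IsOrdering {α : Type*} (V : Finset α) (σ : α → ℕ) : Prop :=
  Set.BijOn σ ↑V (Set.Icc 1 V.card)

open scoped Classical in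
lemma sInf_eq_of_mem_of_le {T : Set ℕ} {k : ℕ} (hk : k ∈ T) (hle : ∀ x ∈ T, k ≤ x) :
    sInf T = k :=
  le_antisymm (Nat.sInf_le hk) (hle _ (Nat.sInf_mem ⟨k, hk⟩))

/-- In a cost-minimizing ordering of a hypergraph, the first position covers
at least as many edges as the second. -/
theorem stmt_3 {α : Type*} [DecidableEq α] (V : Finset α) (E : Finset (Finset α))
    (hE : ∀ e ∈ E, e.Nonempty ∧ e ⊆ V)
    (σ : α → ℕ) (hσ : IsOrdering V σ)
    (hopt : ∀ τ : α → ℕ, IsOrdering V τ → totalCost E σ ≤ totalCost E τ) :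
    coverage E σ 2 ≤ coverage E σ 1 := by
  classical
  set n := V.card with hn
  -- basic facts about firstHit of edges
  have hmem : ∀ e ∈ E, firstHit σ e ∈ σ '' (e : Set α) := by
    intro e he
    exact Nat.sInf_mem (((hE e he).1.to_set.image σ))
  have hbound : ∀ e ∈ E, 1 ≤ firstHit σ e ∧ firstHit σ e ≤ n := by
    intro e he
    obtain ⟨v, hv, hvσ⟩ := hmem e he
    have : σ v ∈ Set.Icc 1 n := hσ.1 ((hE e he).2 hv)
    rw [hvσ] at this
    exact ⟨this.1, this.2⟩
  by_cases hn2 : 2 ≤ n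
  · -- get the vertices at positions 1 and 2
    obtain ⟨v1, hv1V, hv1⟩ := hσ.2.2 (show (1:ℕ) ∈ Set.Icc 1 n by constructor <;> omega)
    obtain ⟨v2, hv2V, hv2⟩ := hσ.2.2 (show (2:ℕ) ∈ Set.Icc 1 n by constructor <;> omega)
    set sw : ℕ ≃ ℕ := Equiv.swap 1 2 with hsw
    set τ : α → ℕ := fun v => sw (σ v) with hτ
    -- τ is an ordering
    have hswMaps : Set.MapsTo sw (Set.Icc 1 n) (Set.Icc 1 n) := by
      intro x hx
      obtain ⟨hx1, hx2⟩ := hx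
      rcases eq_or_ne x 1 with rfl | h1
      · rw [hsw, Equiv.swap_apply_left]; exact ⟨by omega, hn2⟩
      rcases eq_or_ne x 2 with rfl | h2
      · rw [hsw, Equiv.swap_apply_right]; exact ⟨le_refl 1, by omega⟩
      · rw [hsw, Equiv.swap_apply_of_ne_of_ne h1 h2]; exact ⟨hx1, hx2⟩
    have hswBij : Set.BijOn sw (Set.Icc 1 n) (Set.Icc 1 n) := by
      refine ⟨hswMaps, sw.injective.injOn, ?_⟩
      intro y hy
      exact ⟨sw y, hswMaps hy, by rw [hsw, Equiv.swap_apply_self]⟩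
    have hτord : IsOrdering V τ := hswBij.comp hσ
    -- key pointwise identity
    have key : ∀ e ∈ E,
        firstHit τ e + (if firstHit σ e = 2 then 1 else 0)
          = firstHit σ e + (if firstHit σ e = 1 ∧ v2 ∉ e then 1 else 0) := by
      intro e he
      have himg : τ '' (e : Set α) = sw '' (σ '' (e : Set α)) := by
        rw [hτ]; exact Set.image_comp sw σ _
      have hlow : ∀ x ∈ σ '' (e : Set α), 1 ≤ x ∧ x ≤ n := by
        rintro x ⟨v, hv, rfl⟩
        have : σ v ∈ Set.Icc 1 n := hσ.1 ((hE e he).2 hv)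
        exact ⟨this.1, this.2⟩
      have hminlb : ∀ x ∈ σ '' (e : Set α), firstHit σ e ≤ x := fun x hx => Nat.sInf_le hx
      rcases eq_or_ne (firstHit σ e) 1 with h1 | h1
      · by_cases hv2e : v2 ∈ e
        · -- 2 ∈ image, swap gives 1, first hit of τ is 1
          have h2mem : (2:ℕ) ∈ σ '' (e : Set α) := ⟨v2, hv2e, hv2⟩
          have : firstHit τ e = 1 := by
            apply sInf_eq_of_mem_of_le
            · rw [himg]; exact ⟨2, h2mem, by simp [hsw, Equiv.swap_apply_right]⟩
            · rw [himg]
              rintro x ⟨y, hy, rfl⟩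
              rcases eq_or_ne y 1 with rfl | hy1
              · simp [hsw, Equiv.swap_apply_left]
              rcases eq_or_ne y 2 with rfl | hy2
              · simp [hsw, Equiv.swap_apply_right]
              · rw [hsw, Equiv.swap_apply_of_ne_of_ne hy1 hy2]; exact (hlow y hy).1
          simp [this, h1, hv2e]
        · -- 2 ∉ image, swap(1)=2 is new min
          have h2notmem : (2:ℕ) ∉ σ '' (e : Set α) := by
            rintro ⟨v, hv, hveq⟩
            have : v = v2 := hσ.2.1 ((hE e he).2 hv) hv2V (by rw [hveq, hv2])
            exact hv2e (this ▸ hv)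
          have h1mem : (1:ℕ) ∈ σ '' (e : Set α) := h1 ▸ hmem e he
          have : firstHit τ e = 2 := by
            apply sInf_eq_of_mem_of_le
            · rw [himg]; exact ⟨1, h1mem, by simp [hsw, Equiv.swap_apply_left]⟩
            · rw [himg]
              rintro x ⟨y, hy, rfl⟩
              rcases eq_or_ne y 1 with rfl | hy1
              · simp [hsw, Equiv.swap_apply_left]
              have hy2 : y ≠ 2 := fun h => h2notmem (h ▸ hy)
              rw [hsw, Equiv.swap_apply_of_ne_of_ne hy1 hy2]
              have := (hlow y hy).1
              omega
          simp [this, h1, hv2e]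
      · rcases eq_or_ne (firstHit σ e) 2 with h2 | h2
        · have h2mem : (2:ℕ) ∈ σ '' (e : Set α) := h2 ▸ hmem e he
          have : firstHit τ e = 1 := by
            apply sInf_eq_of_mem_of_le
            · rw [himg]; exact ⟨2, h2mem, by simp [hsw, Equiv.swap_apply_right]⟩
            · rw [himg]
              rintro x ⟨y, hy, rfl⟩
              rcases eq_or_ne y 1 with rfl | hy1
              · simp [hsw, Equiv.swap_apply_left]
              rcases eq_or_ne y 2 with rfl | hy2
              · simp [hsw, Equiv.swap_apply_right]
              · rw [hsw, Equiv.swap_apply_of_ne_of_ne hy1 hy2]; exact (hlow y hy).1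
          simp [this, h1, h2]
        · -- firstHit ≥ 3, image fixed by swap
          have h3 : 3 ≤ firstHit σ e := by
            have := (hbound e he).1; omega
          have : sw '' (σ '' (e : Set α)) = σ '' (e : Set α) := by
            apply Set.Subset.antisymm
            · rintro x ⟨y, hy, rfl⟩
              have hy3 : 3 ≤ y := le_trans h3 (hminlb y hy)
              rw [hsw, Equiv.swap_apply_of_ne_of_ne (by omega) (by omega)]
              exact hy
            · intro y hy
              have hy3 : 3 ≤ y := le_trans h3 (hminlb y hy)
              exact ⟨y, hy, by rw [hsw, Equiv.swap_apply_of_ne_of_ne (by omega) (by omega)]⟩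
          have heq : firstHit τ e = firstHit σ e := by
            unfold firstHit; rw [himg, this]
          simp [heq, h1, h2]
    -- sum up
    have hsum : totalCost E τ + coverage E σ 2
        = totalCost E σ + (E.filter fun e => firstHit σ e = 1 ∧ v2 ∉ e).card := by
      unfold totalCost coverage
      rw [Finset.card_filter, Finset.card_filter, ← Finset.sum_add_distrib,
        ← Finset.sum_add_distrib]
      exact Finset.sum_congr rfl key
    have hBle : (E.filter fun e => firstHit σ e = 1 ∧ v2 ∉ e).card ≤ coverage E σ 1 := by
      unfold coverage
      apply Finset.card_le_card
      intro e he
      rw [Finset.mem_filter] at he ⊢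
      exact ⟨he.1, he.2.1⟩
    have := hopt τ hτord
    omega
  · -- n ≤ 1 : no edge is first hit at 2
    have : coverage E σ 2 = 0 := by
      unfold coverage
      rw [Finset.card_eq_zero, Finset.filter_eq_empty_iff]
      intro e he
      have := (hbound e he).2
      omega
    omega
end

section
/- Let H be a finite hypergraph and sigma an ordering of V(H) minimizing the total cost. Then r_sigma(1) >= r_sigma(2) >= ... >= r_sigma(|V(H)|), i.e., the sequence of effective coverages of an optimal ordering is non-increasing. -/
open Finset

lemma firstHit_le {α : Type*} (σ : α → ℕ) {e : Finset α} {v : α} (hv : v ∈ e) :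
    firstHit σ e ≤ σ v :=
  Nat.sInf_le ⟨v, hv, rfl⟩

lemma firstHit_mem {α : Type*} (σ : α → ℕ) {e : Finset α} (he : e.Nonempty) :
    ∃ v ∈ e, σ v = firstHit σ e := by
  have : firstHit σ e ∈ σ '' ↑e := by
    apply Nat.sInf_mem
    obtain ⟨v, hv⟩ := he
    exact ⟨σ v, v, hv, rfl⟩
  obtain ⟨v, hv, h⟩ := this
  exact ⟨v, hv, h⟩

lemma swap_bijOn {S : Set ℕ} {i j : ℕ} (hi : i ∈ S) (hj : j ∈ S) :
    Set.BijOn (Equiv.swap i j) S S := by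
  have hmaps : Set.MapsTo (Equiv.swap i j) S S := by
    intro x hx
    rcases eq_or_ne x i with rfl | hxi
    · simpa [Equiv.swap_apply_left] using hj
    rcases eq_or_ne x j with rfl | hxj
    · simpa [Equiv.swap_apply_right] using hi
    · simpa [Equiv.swap_apply_of_ne_of_ne hxi hxj] using hx
  refine ⟨hmaps, (Equiv.swap i j).injective.injOn, ?_⟩
  intro x hx
  exact ⟨Equiv.swap i j x, hmaps hx, Equiv.swap_apply_self i j x⟩

lemma sum_ite_coverage {α : Type*} (E : Finset (Finset α)) (σ : α → ℕ) (k c : ℕ) :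
    ∑ e ∈ E, (if firstHit σ e = k then c else 0) = coverage E σ k * c := by
  classical
  rw [← Finset.sum_filter, Finset.sum_const, smul_eq_mul, coverage]

/-- The sequence of effective coverages of a cost-minimizing ordering is non-increasing. -/
theorem stmt_4 {α : Type*} [DecidableEq α] (V : Finset α) (E : Finset (Finset α))
    (hE : ∀ e ∈ E, e.Nonempty ∧ e ⊆ V)
    (σ : α → ℕ) (hσ : IsOrdering V σ)
    (hopt : ∀ τ : α → ℕ, IsOrdering V τ → totalCost E σ ≤ totalCost E τ) :
    ∀ i j, 1 ≤ i → i ≤ j → j ≤ V.card → coverage E σ j ≤ coverage E σ i := by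
  classical
  intro i j hi hij hj
  rcases eq_or_lt_of_le hij with rfl | hlt
  · exact le_rfl
  have hiI : i ∈ Set.Icc 1 V.card := ⟨hi, hij.trans hj⟩
  have hjI : j ∈ Set.Icc 1 V.card := ⟨hi.trans hij, hj⟩
  obtain ⟨u, huV, hu⟩ := hσ.surjOn hiI
  obtain ⟨w, hwV, hw⟩ := hσ.surjOn hjI
  set τ : α → ℕ := fun v => Equiv.swap i j (σ v) with hτdef
  have hτ : IsOrdering V τ := (swap_bijOn hiI hjI).comp hσ
  -- per-edge inequality
  have key : ∀ e ∈ E,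
      firstHit τ e + (if firstHit σ e = j then j - i else 0) ≤
      firstHit σ e + (if firstHit σ e = i then j - i else 0) := by
    intro e heE
    obtain ⟨hene, heV⟩ := hE e heE
    obtain ⟨v, hv, hvf⟩ := firstHit_mem σ hene
    by_cases hfi : firstHit σ e = i
    · have hveu : v = u := hσ.injOn (heV hv) huV (by rw [hvf, hfi, hu])
      have hτv : τ v = j := by
        rw [hτdef]; simp only []
        rw [hvf, hfi, Equiv.swap_apply_left]
      have h1 : firstHit τ e ≤ j := hτv ▸ firstHit_le τ hv
      rw [if_neg (show ¬ firstHit σ e = j by omega), if_pos hfi, hfi]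
      omega
    by_cases hfj : firstHit σ e = j
    · have hτv : τ v = i := by
        rw [hτdef]; simp only []
        rw [hvf, hfj, Equiv.swap_apply_right]
      have h1 : firstHit τ e ≤ i := hτv ▸ firstHit_le τ hv
      rw [if_pos hfj, if_neg hfi, hfj]
      omega
    · have hτv : τ v = firstHit σ e := by
        rw [hτdef]; simp only []
        rw [hvf, Equiv.swap_apply_of_ne_of_ne (hvf ▸ hfi) (hvf ▸ hfj)]
      have h1 : firstHit τ e ≤ firstHit σ e := hτv ▸ firstHit_le τ hv
      simp only [hfi, hfj, if_false]
      omega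
  have hsum : totalCost E τ + coverage E σ j * (j - i) ≤
      totalCost E σ + coverage E σ i * (j - i) := by
    rw [totalCost, totalCost, ← sum_ite_coverage E σ j (j - i),
      ← sum_ite_coverage E σ i (j - i), ← Finset.sum_add_distrib, ← Finset.sum_add_distrib]
    exact Finset.sum_le_sum key
  have hle := hopt τ hτ
  have hmul : coverage E σ j * (j - i) ≤ coverage E σ i * (j - i) := by omega
  have hpos : 0 < j - i := by omega
  exact Nat.le_of_mul_le_mul_right hmul hpos
end

section
/- Let H be a finite hypergraph with minimum set cover number tau(H). In any cost-minimizing ordering sigma of V(H), the first vertex covers at least |E(H)|/tau(H) edges; that is, r_sigma(1) >= |E(H)|/tau(H). -/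
/-!
Let `c` be the number of edges through the first vertex of an optimal ordering `σ`. Swapping the
vertices at positions `j < i` changes the cost by at most `(i - j)` times the coverage at `j`
minus the coverage at `i`, so by optimality the coverage never exceeds `c`. Hence at most `c j`
edges are first hit within the first `j` positions, and summing over `j ≤ t = |S|` gives
`cost σ ≥ (t + 1)|E| - c t (t + 1) / 2`. On the other hand, listing the cover `S` first, once
in some order and once reversed, gives two orderings in which the first-hit positions of every
edge add up to at most `t + 1`, so `2 cost σ ≤ (t + 1)|E|`. Together, `|E| ≤ c t`.
-/

open Finset

/-- A set cover: a set of vertices intersecting every hyperedge. -/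
def IsSetCover {α : Type*} [DecidableEq α] (E : Finset (Finset α)) (S : Finset α) : Prop :=
  ∀ e ∈ E, (e ∩ S).Nonempty

section FirstHit

variable {α : Type*} (σ : α → ℕ) {e : Finset α}

lemma firstHit_le_s5 {x : α} (hx : x ∈ e) : firstHit σ e ≤ σ x :=
  Nat.sInf_le ⟨x, hx, rfl⟩

lemma exists_eq_firstHit (he : e.Nonempty) : ∃ x ∈ e, σ x = firstHit σ e :=
  Nat.sInf_mem ((coe_nonempty.mpr he).image σ)

lemma coverage_eq_card_filter (E : Finset (Finset α)) (i : ℕ) :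
    coverage E σ i = #{e ∈ E | firstHit σ e = i} :=
  rfl

lemma firstHit_comp_swap_add_le {i j : ℕ} (hji : j < i) (he : e.Nonempty) :
    firstHit (Equiv.swap j i ∘ σ) e + (i - j) * (if firstHit σ e = i then 1 else 0) ≤
      firstHit σ e + (i - j) * (if firstHit σ e = j then 1 else 0) := by
  obtain ⟨x, hxe, hx⟩ := exists_eq_firstHit σ he
  have hle := firstHit_le_s5 (Equiv.swap j i ∘ σ) hxe
  rw [Function.comp_apply, hx, Equiv.swap_apply_def] at hle
  split_ifs at hle ⊢ <;> omega

lemma totalCost_comp_swap_add_le {E : Finset (Finset α)} (hE : ∀ e ∈ E, e.Nonempty)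
    {i j : ℕ} (hji : j < i) :
    totalCost E (Equiv.swap j i ∘ σ) + (i - j) * coverage E σ i ≤
      totalCost E σ + (i - j) * coverage E σ j := by
  simp only [totalCost, coverage_eq_card_filter, card_filter, mul_sum, ← sum_add_distrib]
  exact sum_le_sum fun e he => firstHit_comp_swap_add_le σ hji (hE e he)

end FirstHit

def reflectPrefix (t k : ℕ) : ℕ :=
  if k ≤ t then t + 1 - k else k

section Ordering

variable {α : Type*} {V : Finset α} {σ : α → ℕ}

lemma IsOrdering.comp_swap (hσ : IsOrdering V σ) {i j : ℕ} (hi : i ∈ Set.Icc 1 V.card)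
    (hj : j ∈ Set.Icc 1 V.card) : IsOrdering V (Equiv.swap i j ∘ σ) :=
  (Equiv.bijOn_swap hi hj).comp hσ

lemma IsOrdering.one_le_firstHit (hσ : IsOrdering V σ) {e : Finset α} (he : e.Nonempty)
    (heV : e ⊆ V) : 1 ≤ firstHit σ e := by
  obtain ⟨x, hxe, hx⟩ := exists_eq_firstHit σ he
  exact hx ▸ (hσ.mapsTo (heV hxe)).1

lemma bijOn_reflectPrefix {t n : ℕ} (htn : t ≤ n) :
    Set.BijOn (reflectPrefix t) (Set.Icc 1 n) (Set.Icc 1 n) := by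
  have hmaps : Set.MapsTo (reflectPrefix t) (Set.Icc 1 n) (Set.Icc 1 n) := by
    intro k hk
    simp only [reflectPrefix, Set.mem_Icc] at hk ⊢
    split_ifs <;> omega
  have hinv : Set.LeftInvOn (reflectPrefix t) (reflectPrefix t) (Set.Icc 1 n) := by
    intro k hk
    simp only [reflectPrefix, Set.mem_Icc] at hk ⊢
    split_ifs <;> omega
  exact Set.InvOn.bijOn ⟨hinv, hinv⟩ hmaps hmaps

lemma IsOrdering.comp_reflectPrefix (hσ : IsOrdering V σ) {t : ℕ} (htV : t ≤ V.card) :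
    IsOrdering V (reflectPrefix t ∘ σ) :=
  (bijOn_reflectPrefix htV).comp hσ

lemma exists_isOrdering_mapsTo_Icc [DecidableEq α] {S : Finset α} (hSV : S ⊆ V) :
    ∃ σ, IsOrdering V σ ∧ Set.MapsTo σ S (Set.Icc 1 S.card) := by
  obtain ⟨f, hf⟩ := S.finite_toSet.exists_bijOn_of_encard_eq
    (t := (Finset.Icc 1 S.card : Set ℕ))
    (by rw [Set.encard_coe_eq_coe_finsetCard, Set.encard_coe_eq_coe_finsetCard, Nat.card_Icc,
      Nat.add_sub_cancel])
  obtain ⟨g, hg⟩ := (V \ S).finite_toSet.exists_bijOn_of_encard_eq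
    (t := (Finset.Icc (S.card + 1) V.card : Set ℕ))
    (by rw [Set.encard_coe_eq_coe_finsetCard, Set.encard_coe_eq_coe_finsetCard, Nat.card_Icc,
      Finset.card_sdiff_of_subset hSV, Nat.add_sub_add_right])
  set σ : α → ℕ := fun x => if x ∈ S then f x else g x
  have hfσ : Set.BijOn σ S ↑(Finset.Icc 1 S.card) := hf.congr fun x hx => by simp_all [σ]
  have hgσ : Set.BijOn σ ↑(V \ S) ↑(Finset.Icc (S.card + 1) V.card) :=
    hg.congr fun x hx => by simp_all [σ]
  refine ⟨σ, ?_, by simpa using hfσ.mapsTo⟩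
  have hinj : Set.InjOn σ (↑S ∪ ↑(V \ S)) := by
    refine (Set.injOn_union (Finset.disjoint_coe.2 Finset.disjoint_sdiff)).2
      ⟨hfσ.injOn, hgσ.injOn, fun x hx y hy hxy => ?_⟩
    have := hfσ.mapsTo hx
    have := hgσ.mapsTo hy
    simp only [Finset.coe_Icc, Set.mem_Icc] at *
    omega
  have hunion := hfσ.union hgσ hinj
  have hIcc : (↑(Finset.Icc 1 S.card) ∪ ↑(Finset.Icc (S.card + 1) V.card) : Set ℕ) =
      Set.Icc 1 V.card := by
    ext k
    simp only [Set.mem_union, Finset.coe_Icc, Set.mem_Icc]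
    have := Finset.card_le_card hSV
    omega
  rwa [← coe_union, union_sdiff_of_subset hSV, hIcc] at hunion

variable {E : Finset (Finset α)}

lemma IsOrdering.mem_Icc_of_coverage_pos (hσ : IsOrdering V σ)
    (hE : ∀ e ∈ E, e.Nonempty ∧ e ⊆ V) {i : ℕ} (hi : 0 < coverage E σ i) :
    i ∈ Set.Icc 1 V.card := by
  obtain ⟨e, he⟩ := card_pos.1 (coverage_eq_card_filter σ E i ▸ hi)
  rw [mem_filter] at he
  obtain ⟨x, hxe, hx⟩ := exists_eq_firstHit σ (hE e he.1).1
  exact he.2 ▸ hx ▸ hσ.mapsTo ((hE e he.1).2 hxe)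

lemma IsOrdering.coverage_le_coverage_of_le (hσ : IsOrdering V σ)
    (hE : ∀ e ∈ E, e.Nonempty ∧ e ⊆ V)
    (hopt : ∀ τ : α → ℕ, IsOrdering V τ → totalCost E σ ≤ totalCost E τ)
    {i j : ℕ} (hj : 1 ≤ j) (hji : j ≤ i) : coverage E σ i ≤ coverage E σ j := by
  rcases hji.eq_or_lt with rfl | hji
  · rfl
  rcases (coverage E σ i).eq_zero_or_pos with hzero | hpos
  · simp [hzero]
  have hi := hσ.mem_Icc_of_coverage_pos hE hpos
  have hswap := totalCost_comp_swap_add_le σ (fun e he => (hE e he).1) hji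
  have hcost := hopt _ (hσ.comp_swap ⟨hj, hji.le.trans hi.2⟩ hi)
  have hmul : (i - j) * coverage E σ i ≤ (i - j) * coverage E σ j := by omega
  exact Nat.le_of_mul_le_mul_left hmul (Nat.sub_pos_of_lt hji)

lemma two_mul_totalCost_le [DecidableEq α] {S : Finset α} (hSV : S ⊆ V) (hS : IsSetCover E S)
    (hopt : ∀ τ : α → ℕ, IsOrdering V τ → totalCost E σ ≤ totalCost E τ) :
    2 * totalCost E σ ≤ #E * (#S + 1) := by
  obtain ⟨ψ, hψ, hψS⟩ := exists_isOrdering_mapsTo_Icc hSV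
  set ψ' := reflectPrefix (#S) ∘ ψ
  have hψ' : IsOrdering V ψ' := hψ.comp_reflectPrefix (card_le_card hSV)
  have hpair : ∀ e ∈ E, firstHit ψ e + firstHit ψ' e ≤ #S + 1 := by
    intro e he
    obtain ⟨x, hx⟩ := hS e he
    rw [mem_inter] at hx
    obtain ⟨hx_pos, hx_le⟩ := hψS hx.2
    have h1 := firstHit_le_s5 ψ hx.1
    have h2 : firstHit ψ' e ≤ #S + 1 - ψ x := (firstHit_le_s5 ψ' hx.1).trans_eq (if_pos hx_le)
    omega
  calc 2 * totalCost E σ ≤ totalCost E ψ + totalCost E ψ' := by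
        linarith [hopt ψ hψ, hopt ψ' hψ']
    _ = ∑ e ∈ E, (firstHit ψ e + firstHit ψ' e) := sum_add_distrib.symm
    _ ≤ ∑ e ∈ E, (#S + 1) := sum_le_sum hpair
    _ = #E * (#S + 1) := by rw [sum_const, smul_eq_mul]

end Ordering

section Counting

variable {ι : Type*} {E : Finset ι} {f : ι → ℕ} {c : ℕ}

lemma card_filter_le_le_mul (hf : ∀ e ∈ E, 1 ≤ f e) (hc : ∀ i, 1 ≤ i → #{e ∈ E | f e = i} ≤ c)
    (j : ℕ) : #{e ∈ E | f e ≤ j} ≤ c * j := by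
  have hmaps : ∀ e ∈ ({e ∈ E | f e ≤ j} : Finset ι), f e ∈ Icc 1 j := by
    intro e he
    rw [mem_filter] at he
    exact mem_Icc.2 ⟨hf e he.1, he.2⟩
  have hfiber : ∀ i ∈ Icc 1 j, #{e ∈ ({e ∈ E | f e ≤ j} : Finset ι) | f e = i} ≤ c :=
    fun i hi => (card_le_card (filter_subset_filter _ (filter_subset _ _))).trans
      (hc i (mem_Icc.1 hi).1)
  simpa using card_le_mul_card_image_of_maps_to hmaps c hfiber

lemma succ_mul_card_le_sum_add_sum_card_filter (t : ℕ) :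
    (t + 1) * #E ≤ ∑ e ∈ E, f e + ∑ j ∈ range (t + 1), #{e ∈ E | f e ≤ j} := by
  simp only [card_filter]
  rw [sum_comm, ← sum_add_distrib, mul_comm, ← smul_eq_mul, ← sum_const]
  refine sum_le_sum fun e _ => ?_
  rw [← card_filter, range_eq_Ico, Ico_filter_le, Nat.card_Ico]
  omega

lemma card_le_mul_of_two_mul_sum_le (hf : ∀ e ∈ E, 1 ≤ f e)
    (hc : ∀ i, 1 ≤ i → #{e ∈ E | f e = i} ≤ c) {t : ℕ}
    (hsum : 2 * ∑ e ∈ E, f e ≤ #E * (t + 1)) : #E ≤ c * t := by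
  have hlower := succ_mul_card_le_sum_add_sum_card_filter (E := E) (f := f) t
  have hprefix : ∑ j ∈ range (t + 1), #{e ∈ E | f e ≤ j} ≤ c * ∑ j ∈ range (t + 1), j := by
    rw [mul_sum]
    exact sum_le_sum fun j _ => card_filter_le_le_mul hf hc j
  have hgauss : (∑ j ∈ range (t + 1), j) * 2 = (t + 1) * t := by
    rw [sum_range_id_mul_two, Nat.add_sub_cancel]
  have : (t + 1) * #E ≤ (t + 1) * (c * t) := by nlinarith
  exact Nat.le_of_mul_le_mul_left this t.succ_pos

end Counting

theorem stmt_5_general {α : Type*} [DecidableEq α] (V : Finset α) (E : Finset (Finset α))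
    (hE : ∀ e ∈ E, e.Nonempty ∧ e ⊆ V)
    (S : Finset α) (hSV : S ⊆ V) (hScov : IsSetCover E S)
    (σ : α → ℕ) (hσ : IsOrdering V σ)
    (hopt : ∀ τ : α → ℕ, IsOrdering V τ → totalCost E σ ≤ totalCost E τ) :
    (E.card : ℝ) / (S.card : ℝ) ≤ (coverage E σ 1 : ℝ) := by
  have hcov : ∀ i, 1 ≤ i → #{e ∈ E | firstHit σ e = i} ≤ coverage E σ 1 := fun i hi =>
    coverage_eq_card_filter σ E i ▸ hσ.coverage_le_coverage_of_le hE hopt le_rfl hi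
  have hcard : #E ≤ coverage E σ 1 * #S :=
    card_le_mul_of_two_mul_sum_le (fun e he => hσ.one_le_firstHit (hE e he).1 (hE e he).2) hcov
      (two_mul_totalCost_le hSV hScov hopt)
  exact div_le_of_le_mul₀ (Nat.cast_nonneg _) (Nat.cast_nonneg _) (by exact_mod_cast hcard)

/-- In any cost-minimizing ordering, the first vertex covers at least `|E(H)|/τ(H)` edges,
where `S` is a minimum set cover (so `|S| = τ(H)`). -/
theorem stmt_5 {α : Type*} [DecidableEq α] (V : Finset α) (E : Finset (Finset α))
    (hE : ∀ e ∈ E, e.Nonempty ∧ e ⊆ V)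
    (S : Finset α) (hSV : S ⊆ V) (hScov : IsSetCover E S)
    (hSmin : ∀ T ⊆ V, IsSetCover E T → S.card ≤ T.card)
    (σ : α → ℕ) (hσ : IsOrdering V σ)
    (hopt : ∀ τ : α → ℕ, IsOrdering V τ → totalCost E σ ≤ totalCost E τ) :
    (E.card : ℝ) / (S.card : ℝ) ≤ (coverage E σ 1 : ℝ) :=
  stmt_5_general V E hE S hSV hScov σ hσ hopt
end

section
/- Let H be a finite hypergraph and let sigma = <v_1,...,v_n> be a cost-minimizing ordering of V(H). For each i, the induced ordering <v_i,...,v_n> is a cost-minimizing ordering of the hypergraph H - {v_1,...,v_{i-1}} (vertex set V(H) minus the removed vertices, edges being the edges of H disjoint from the removed set). -/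
open Finset

lemma firstHit_eq_inf' {α : Type*} (σ : α → ℕ) (e : Finset α) (he : e.Nonempty) :
    firstHit σ e = e.inf' he σ := by
  unfold firstHit
  apply le_antisymm
  · obtain ⟨w, hw, hweq⟩ := e.exists_mem_eq_inf' he σ
    have hmem : σ w ∈ σ '' ↑e := ⟨w, hw, rfl⟩
    calc sInf (σ '' ↑e) ≤ σ w := Nat.sInf_le hmem
    _ = _ := hweq.symm
  · have hne : (σ '' ↑e).Nonempty := ⟨σ he.choose, he.choose, he.choose_spec, rfl⟩
    obtain ⟨w, hw, hweq⟩ := Nat.sInf_mem hne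
    rw [← hweq]
    exact Finset.inf'_le σ hw

lemma inf'_sub_shift {α : Type*} (e : Finset α) (he : e.Nonempty) (f : α → ℕ) (c : ℕ)
    (hf : ∀ v ∈ e, c ≤ f v) :
    e.inf' he f = e.inf' he (fun v => f v - c) + c := by
  apply le_antisymm
  · obtain ⟨w, hw, hweq⟩ := e.exists_mem_eq_inf' he (fun v => f v - c)
    have h1 : e.inf' he f ≤ f w := Finset.inf'_le f hw
    have h2 := hf w hw
    omega
  · obtain ⟨w, hw, hweq⟩ := e.exists_mem_eq_inf' he f
    have h1 : e.inf' he (fun v => f v - c) ≤ f w - c := Finset.inf'_le _ hw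
    have h2 := hf w hw
    omega


open scoped Classical in
/-- If `σ` is a cost-minimizing ordering of `H` and we remove the first `i - 1` vertices,
then the induced ordering (shifted by `i - 1`) is a cost-minimizing ordering of the
hypergraph `H - {v_1, ..., v_{i-1}}`, whose edges are the edges disjoint from the
removed set. -/
theorem stmt_6 {α : Type*} [DecidableEq α] (V : Finset α) (E : Finset (Finset α))
    (hE : ∀ e ∈ E, e.Nonempty ∧ e ⊆ V)
    (σ : α → ℕ) (hσ : IsOrdering V σ)
    (hopt : ∀ τ : α → ℕ, IsOrdering V τ → totalCost E σ ≤ totalCost E τ)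
    (i : ℕ) (hi1 : 1 ≤ i) (hin : i ≤ V.card) :
    IsOrdering (V.filter fun v => i ≤ σ v) (fun v => σ v - (i - 1)) ∧
    ∀ τ : α → ℕ, IsOrdering (V.filter fun v => i ≤ σ v) τ →
      totalCost (E.filter fun e => ∀ v ∈ e, i ≤ σ v) (fun v => σ v - (i - 1)) ≤
      totalCost (E.filter fun e => ∀ v ∈ e, i ≤ σ v) τ := by
  set n := V.card with hn
  set V' := V.filter fun v => i ≤ σ v with hV'
  -- membership characterization
  have hmemV' : ∀ v, v ∈ V' ↔ v ∈ V ∧ i ≤ σ v := by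
    intro v; simp [hV']
  have hrange : ∀ v ∈ V, 1 ≤ σ v ∧ σ v ≤ n := by
    intro v hv
    have := hσ.1 hv
    simpa [Set.mem_Icc] using this
  -- cardinality of V'
  have himg : V'.image σ = Finset.Icc i n := by
    apply Finset.ext
    intro m
    simp only [Finset.mem_image, Finset.mem_Icc]
    constructor
    · rintro ⟨v, hv, rfl⟩
      rw [hmemV'] at hv
      have := hrange v hv.1
      omega
    · rintro ⟨h1, h2⟩
      have hm : m ∈ Set.Icc 1 n := by simp [Set.mem_Icc]; omega
      obtain ⟨v, hv, rfl⟩ := hσ.2.2 hm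
      exact ⟨v, (hmemV' v).2 ⟨hv, h1⟩, rfl⟩
  have hcard : V'.card = n + 1 - i := by
    have h1 : V'.card = (V'.image σ).card := by
      rw [Finset.card_image_of_injOn]
      exact hσ.2.1.mono (by intro v hv; exact ((hmemV' v).1 hv).1)
    rw [h1, himg, Nat.card_Icc]
  -- Part 1 : the shifted ordering on V'
  have hord : IsOrdering V' (fun v => σ v - (i - 1)) := by
    refine ⟨?_, ?_, ?_⟩
    · intro v hv
      rw [Finset.mem_coe, hmemV'] at hv
      have := hrange v hv.1
      simp only [Set.mem_Icc, hcard]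
      omega
    · intro a ha b hb hab
      rw [Finset.mem_coe, hmemV'] at ha hb
      simp only at hab
      have : σ a = σ b := by omega
      exact hσ.2.1 ha.1 hb.1 this
    · intro m hm
      rw [hcard] at hm
      simp only [Set.mem_Icc] at hm
      have hm' : m + (i - 1) ∈ Set.Icc 1 n := by simp [Set.mem_Icc]; omega
      obtain ⟨v, hv, hveq⟩ := hσ.2.2 hm'
      refine ⟨v, (hmemV' v).2 ⟨hv, by omega⟩, by simp; omega⟩
  refine ⟨hord, ?_⟩
  -- Part 2 : optimality
  intro τ hτ
  set τ' : α → ℕ := fun v => if i ≤ σ v then τ v + (i - 1) else σ v with hτ'def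
  have hτrange : ∀ v ∈ V', 1 ≤ τ v ∧ τ v ≤ n + 1 - i := by
    intro v hv
    have := hτ.1 hv
    simp only [Set.mem_Icc, hcard] at this
    exact this
  -- τ' is an ordering of V
  have hτ' : IsOrdering V τ' := by
    refine ⟨?_, ?_, ?_⟩
    · intro v hv
      have hr := hrange v hv
      by_cases hcase : i ≤ σ v
      · have := hτrange v ((hmemV' v).2 ⟨hv, hcase⟩)
        simp only [hτ'def, if_pos hcase, Set.mem_Icc]
        omega
      · simp only [hτ'def, if_neg hcase, Set.mem_Icc]
        omega
    · intro a ha b hb hab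
      simp only [hτ'def] at hab
      by_cases hca : i ≤ σ a <;> by_cases hcb : i ≤ σ b
      · rw [if_pos hca, if_pos hcb] at hab
        exact hτ.2.1 ((hmemV' a).2 ⟨ha, hca⟩) ((hmemV' b).2 ⟨hb, hcb⟩) (by omega)
      · rw [if_pos hca, if_neg hcb] at hab
        have := hτrange a ((hmemV' a).2 ⟨ha, hca⟩)
        omega
      · rw [if_neg hca, if_pos hcb] at hab
        have := hτrange b ((hmemV' b).2 ⟨hb, hcb⟩)
        omega
      · rw [if_neg hca, if_neg hcb] at hab
        exact hσ.2.1 ha hb hab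
    · intro m hm
      simp only [Set.mem_Icc] at hm
      by_cases hcase : i ≤ m
      · have hm' : m - (i - 1) ∈ Set.Icc 1 V'.card := by
          simp only [Set.mem_Icc, hcard]; omega
        obtain ⟨v, hv, hveq⟩ := hτ.2.2 hm'
        have hv' := (hmemV' v).1 hv
        refine ⟨v, hv'.1, ?_⟩
        simp only [hτ'def, if_pos hv'.2]
        omega
      · obtain ⟨v, hv, hveq⟩ := hσ.2.2 (show m ∈ Set.Icc 1 n by simp [Set.mem_Icc]; omega)
        refine ⟨v, hv, ?_⟩
        have : ¬ i ≤ σ v := by omega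
        simp only [hτ'def, if_neg this]
        exact hveq
  have hmain := hopt τ' hτ'
  set p : Finset α → Prop := fun e => ∀ v ∈ e, i ≤ σ v with hp
  set E2 := E.filter p with hE2
  set E1 := E.filter (fun e => ¬ p e) with hE1
  -- per-edge identities
  have key1 : ∀ e ∈ E1, firstHit τ' e = firstHit σ e := by
    intro e he
    simp only [hE1, Finset.mem_filter, hp] at he
    obtain ⟨heE, hnp⟩ := he
    push_neg at hnp
    obtain ⟨u, hu, hu2⟩ := hnp
    obtain ⟨hene, heV⟩ := hE e heE
    rw [firstHit_eq_inf' τ' e hene, firstHit_eq_inf' σ e hene]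
    apply le_antisymm
    · obtain ⟨w, hw, hweq⟩ := e.exists_mem_eq_inf' hene σ
      have hlow : σ w < i := lt_of_le_of_lt (hweq ▸ Finset.inf'_le σ hu) hu2
      have : τ' w = σ w := by simp [hτ'def, if_neg (by omega : ¬ i ≤ σ w)]
      calc e.inf' hene τ' ≤ τ' w := Finset.inf'_le τ' hw
      _ = σ w := this
      _ = _ := hweq.symm
    · obtain ⟨w, hw, hweq⟩ := e.exists_mem_eq_inf' hene τ'
      rw [hweq]
      by_cases hcase : i ≤ σ w
      · have := hτrange w ((hmemV' w).2 ⟨heV hw, hcase⟩)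
        have h2 : e.inf' hene σ ≤ σ u := Finset.inf'_le σ hu
        simp only [hτ'def, if_pos hcase]
        omega
      · simp only [hτ'def, if_neg hcase]
        exact Finset.inf'_le σ hw
  have key2 : ∀ e ∈ E2, firstHit σ e = firstHit (fun v => σ v - (i - 1)) e + (i - 1) := by
    intro e he
    simp only [hE2, Finset.mem_filter, hp] at he
    obtain ⟨heE, hpe⟩ := he
    obtain ⟨hene, heV⟩ := hE e heE
    rw [firstHit_eq_inf' σ e hene, firstHit_eq_inf' _ e hene]
    exact inf'_sub_shift e hene σ (i-1) (fun v hv => by have := hpe v hv; omega)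
  have key3 : ∀ e ∈ E2, firstHit τ' e = firstHit τ e + (i - 1) := by
    intro e he
    simp only [hE2, Finset.mem_filter, hp] at he
    obtain ⟨heE, hpe⟩ := he
    obtain ⟨hene, heV⟩ := hE e heE
    rw [firstHit_eq_inf' τ' e hene, firstHit_eq_inf' τ e hene]
    have hcongr : e.inf' hene τ' = e.inf' hene (fun v => τ v + (i - 1)) := by
      apply Finset.inf'_congr hene rfl
      intro v hv
      simp [hτ'def, if_pos (hpe v hv)]
    rw [hcongr]
    rw [inf'_sub_shift e hene (fun v => τ v + (i - 1)) (i - 1) (fun v hv => Nat.le_add_left _ _)]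
    congr 1
    apply Finset.inf'_congr hene rfl
    intro v hv
    show τ v + (i - 1) - (i - 1) = τ v
    omega
  -- assemble
  have hsplitσ : totalCost E σ =
      (∑ e ∈ E2, firstHit (fun v => σ v - (i - 1)) e) + E2.card * (i - 1) + ∑ e ∈ E1, firstHit σ e := by
    unfold totalCost
    rw [← Finset.sum_filter_add_sum_filter_not E p (firstHit σ)]
    rw [Finset.sum_congr rfl key2, Finset.sum_add_distrib, Finset.sum_const, smul_eq_mul]
  have hsplitτ : totalCost E τ' =
      (∑ e ∈ E2, firstHit τ e) + E2.card * (i - 1) + ∑ e ∈ E1, firstHit σ e := by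
    unfold totalCost
    rw [← Finset.sum_filter_add_sum_filter_not E p (firstHit τ')]
    rw [Finset.sum_congr rfl key3, Finset.sum_add_distrib, Finset.sum_const, smul_eq_mul,
      Finset.sum_congr rfl key1]
  rw [hsplitσ, hsplitτ] at hmain
  unfold totalCost
  omega
end

section
/- Let G be a graph on vertices {v_1,...,v_n} and H_G the hypergraph on vertex set A ∪ B with A = V(G), B = {b_1,b_2,b_3}, and edges: {v_i, b_k} for all i,k; {v_i, v_j, b_k} for each edge v_i v_j of G and each k; and X ∪ {b_k} for every X ⊆ A with |X| >= 3 and each k. Then A and B are the only minimal set covers of H_G; in particular tau(H_G) = 3. -/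
open Finset

/-- The edge set of the hypergraph `H_G` associated with a graph `G` on `Fin n`:
vertices are `A ∪ B` with `A = V(G)` (embedded by `Sum.inl`) and `B = {b₁, b₂, b₃}`
(embedded by `Sum.inr`); edges are `{vᵢ, b_k}`, `{vᵢ, vⱼ, b_k}` for `vᵢvⱼ ∈ E(G)`,
and `X ∪ {b_k}` for `X ⊆ A` with `|X| ≥ 3`. -/
def IsHG {n : ℕ} (G : SimpleGraph (Fin n)) (E : Finset (Finset (Fin n ⊕ Fin 3))) : Prop :=
  ∀ e : Finset (Fin n ⊕ Fin 3),
    e ∈ E ↔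
      (∃ (i : Fin n) (k : Fin 3), e = {Sum.inl i, Sum.inr k}) ∨
      (∃ (i j : Fin n) (k : Fin 3), G.Adj i j ∧ e = {Sum.inl i, Sum.inl j, Sum.inr k}) ∨
      (∃ X : Finset (Fin n), 3 ≤ X.card ∧ ∃ k : Fin 3, e = X.image Sum.inl ∪ {Sum.inr k})

/-! Every edge of `H_G` meets `A` and `B`, so both are covers. Each vertex of `A` or `B` has a
private edge (`{vᵢ, b₁}`, resp. `A ∪ {b_k}`), so both are minimal. Finally a cover missing some
`b_k` must contain every `vᵢ` because of the edges `{vᵢ, b_k}`, so every cover contains `A` or `B`;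
hence these are the only minimal covers and every cover has at least `min n 3 = 3` elements. -/

section SetCover

variable {α : Type*} [DecidableEq α] {E : Finset (Finset α)} {S T : Finset α}

def IsMinimalSetCover (E : Finset (Finset α)) (S : Finset α) : Prop :=
  IsSetCover E S ∧ ∀ T ⊂ S, ¬ IsSetCover E T

theorem IsMinimalSetCover.eq_of_subset (hS : IsMinimalSetCover E S) (hT : IsSetCover E T)
    (hTS : T ⊆ S) : T = S := by
  by_contra hne
  exact hS.2 T (hTS.ssubset_of_ne hne) hT

theorem IsSetCover.mem_of_pair_mem {a b : α} (hS : IsSetCover E S) (hab : {a, b} ∈ E)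
    (hb : b ∉ S) : a ∈ S := by
  obtain ⟨y, hy⟩ := hS _ hab
  rw [mem_inter, mem_insert, mem_singleton] at hy
  obtain ⟨rfl | rfl, hyS⟩ := hy
  exacts [hyS, absurd hyS hb]

theorem isMinimalSetCover_of_forall_exists_inter_eq_singleton (hS : IsSetCover E S)
    (hpriv : ∀ x ∈ S, ∃ e ∈ E, e ∩ S = {x}) : IsMinimalSetCover E S := by
  refine ⟨hS, fun T hTS hT => ?_⟩
  obtain ⟨x, hxS, hxT⟩ := exists_of_ssubset hTS
  obtain ⟨e, he, hex⟩ := hpriv x hxS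
  obtain ⟨y, hy⟩ := hT e he
  have hyx : y ∈ e ∩ S := inter_subset_inter_left hTS.subset hy
  rw [hex, mem_singleton] at hyx
  exact hxT (hyx ▸ (mem_inter.1 hy).2)

theorem isMinimalSetCover_iff_of_forall_superset {A B : Finset α} (hA : IsMinimalSetCover E A)
    (hB : IsMinimalSetCover E B) (hsup : ∀ S, IsSetCover E S → A ⊆ S ∨ B ⊆ S) :
    IsMinimalSetCover E S ↔ S = A ∨ S = B := by
  refine ⟨fun hS => ?_, ?_⟩
  · rcases hsup S hS.1 with h | h
    exacts [Or.inl (hS.eq_of_subset hA.1 h).symm, Or.inr (hS.eq_of_subset hB.1 h).symm]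
  · rintro (rfl | rfl)
    exacts [hA, hB]

end SetCover

namespace IsHG

variable {n : ℕ} {G : SimpleGraph (Fin n)} {E : Finset (Finset (Fin n ⊕ Fin 3))}

theorem pair_mem (hHG : IsHG G E) (i : Fin n) (k : Fin 3) :
    ({Sum.inl i, Sum.inr k} : Finset (Fin n ⊕ Fin 3)) ∈ E :=
  (hHG _).2 (Or.inl ⟨i, k, rfl⟩)

theorem image_inl_union_mem (hHG : IsHG G E) (hn : 3 ≤ n) (k : Fin 3) :
    (univ.image Sum.inl ∪ {Sum.inr k} : Finset (Fin n ⊕ Fin 3)) ∈ E :=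
  (hHG _).2 (Or.inr (Or.inr ⟨univ, by simpa using hn, k, rfl⟩))

theorem isSetCover_image_inl (hHG : IsHG G E) :
    IsSetCover E ((univ : Finset (Fin n)).image Sum.inl) := by
  intro e he
  rcases (hHG e).1 he with ⟨i, k, rfl⟩ | ⟨i, j, k, -, rfl⟩ | ⟨X, hX, k, rfl⟩
  · exact ⟨Sum.inl i, by simp⟩
  · exact ⟨Sum.inl i, by simp⟩
  · obtain ⟨x, hx⟩ := card_pos.mp (by omega : 0 < X.card)
    exact ⟨Sum.inl x, by simp [hx]⟩

theorem isSetCover_image_inr (hHG : IsHG G E) :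
    IsSetCover E ((univ : Finset (Fin 3)).image Sum.inr) := by
  intro e he
  rcases (hHG e).1 he with ⟨i, k, rfl⟩ | ⟨i, j, k, -, rfl⟩ | ⟨X, -, k, rfl⟩ <;>
    exact ⟨Sum.inr k, by simp⟩

theorem isMinimalSetCover_image_inl (hHG : IsHG G E) :
    IsMinimalSetCover E ((univ : Finset (Fin n)).image Sum.inl) := by
  refine isMinimalSetCover_of_forall_exists_inter_eq_singleton hHG.isSetCover_image_inl ?_
  simp only [mem_image, mem_univ, true_and, forall_exists_index, forall_apply_eq_imp_iff]
  exact fun i => ⟨_, hHG.pair_mem i 0, by ext (x | x) <;> simp⟩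

theorem isMinimalSetCover_image_inr (hHG : IsHG G E) (hn : 3 ≤ n) :
    IsMinimalSetCover E ((univ : Finset (Fin 3)).image Sum.inr) := by
  refine isMinimalSetCover_of_forall_exists_inter_eq_singleton hHG.isSetCover_image_inr ?_
  simp only [mem_image, mem_univ, true_and, forall_exists_index, forall_apply_eq_imp_iff]
  exact fun k => ⟨_, hHG.image_inl_union_mem hn k, by ext (x | x) <;> simp⟩

theorem image_inl_subset_or_image_inr_subset (hHG : IsHG G E) {S : Finset (Fin n ⊕ Fin 3)}
    (hS : IsSetCover E S) : univ.image Sum.inl ⊆ S ∨ univ.image Sum.inr ⊆ S := by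
  by_cases hB : ∀ k : Fin 3, Sum.inr k ∈ S
  · exact Or.inr (by simpa [image_subset_iff] using hB)
  · obtain ⟨k, hk⟩ := not_forall.1 hB
    have hA (i : Fin n) : Sum.inl i ∈ S := hS.mem_of_pair_mem (hHG.pair_mem i k) hk
    exact Or.inl (by simpa [image_subset_iff] using hA)

end IsHG

/-- In `H_G`, the sets `A` and `B` are the only minimal set covers; in particular
`τ(H_G) = 3`. -/
theorem stmt_10 (n : ℕ) (hn : 3 ≤ n) (G : SimpleGraph (Fin n))
    (E : Finset (Finset (Fin n ⊕ Fin 3))) (hHG : IsHG G E) :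
    (∀ S : Finset (Fin n ⊕ Fin 3),
      (IsSetCover E S ∧ ∀ T ⊂ S, ¬ IsSetCover E T) ↔
        (S = (Finset.univ : Finset (Fin n)).image Sum.inl ∨
         S = (Finset.univ : Finset (Fin 3)).image Sum.inr)) ∧
    (∃ S : Finset (Fin n ⊕ Fin 3), IsSetCover E S ∧ S.card = 3) ∧
    (∀ S : Finset (Fin n ⊕ Fin 3), IsSetCover E S → 3 ≤ S.card) := by
  have hsup := @hHG.image_inl_subset_or_image_inr_subset
  refine ⟨fun _ => isMinimalSetCover_iff_of_forall_superset hHG.isMinimalSetCover_image_inl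
      (hHG.isMinimalSetCover_image_inr hn) fun _ => hsup,
    ⟨_, hHG.isSetCover_image_inr, by simp [card_image_of_injective _ Sum.inr_injective]⟩,
    fun S hS => ?_⟩
  rcases hsup hS with h | h
  · have := card_le_card h
    rw [card_image_of_injective _ Sum.inl_injective, card_univ, Fintype.card_fin] at this
    omega
  · simpa [card_image_of_injective _ Sum.inr_injective] using card_le_card h
end

section
/- In the hypergraph H_G (as constructed from a graph G with n vertices and m edges), the ordering that selects b_1, b_2, b_3 first has effective coverages r(1) = r(2) = r(3) = 2^n - 1 - C(n,2) + m, r(i) = 0 for i >= 4, and total cost 6*(2^n - 1 - C(n,2) + m). -/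
open Finset

/-!
Every edge of `H_G` contains exactly one of `b₁, b₂, b₃`, so when these come first an edge
through `b_k` is first hit at position `k`. The edges through `b_k` are `X ∪ {b_k}` for `X` in
the link of `b_k`, which consists of all nonempty subsets of `A` except the `C(n,2) - m`
non-adjacent pairs; hence each `r(k)` equals `2ⁿ - 1 - (C(n,2) - m)` and the cost is
`(1 + 2 + 3)` times that.
-/

lemma Sym2.toFinset_injective {α : Type*} [DecidableEq α] :
    Function.Injective (Sym2.toFinset : Sym2 α → Finset α) :=
  fun _ _ h => Sym2.ext fun x => by rw [← Sym2.mem_toFinset, h, Sym2.mem_toFinset]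

section FirstHit

variable {α : Type*}

lemma firstHit_eq_of_forall_le {σ : α → ℕ} {e : Finset α} {a : α} (ha : a ∈ e)
    (h : ∀ b ∈ e, σ a ≤ σ b) : firstHit σ e = σ a :=
  IsLeast.csInf_eq ⟨⟨a, ha, rfl⟩, by rintro _ ⟨b, hb, rfl⟩; exact h b hb⟩

lemma coverage_eq_zero_of_notMem {E : Finset (Finset α)} {σ : α → ℕ} {S : Finset ℕ}
    (hS : ∀ e ∈ E, firstHit σ e ∈ S) {i : ℕ} (hi : i ∉ S) : coverage E σ i = 0 := by
  rw [coverage, card_eq_zero, filter_eq_empty_iff]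
  exact fun e he hei => hi (hei ▸ hS e he)

lemma totalCost_eq_sum_mul_coverage {E : Finset (Finset α)} {σ : α → ℕ} {S : Finset ℕ}
    (hS : ∀ e ∈ E, firstHit σ e ∈ S) : totalCost E σ = ∑ i ∈ S, i * coverage E σ i := by
  rw [totalCost, ← sum_fiberwise_of_maps_to hS]
  refine sum_congr rfl fun i _ => ?_
  rw [coverage, sum_congr rfl fun e he => (mem_filter.1 he).2, sum_const, smul_eq_mul, mul_comm]

lemma IsOrdering.lt_inl [Fintype α] {p : ℕ} {σ : α ⊕ Fin p → ℕ} (hσ : IsOrdering univ σ)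
    (hB : ∀ k : Fin p, σ (.inr k) = k + 1) (a : α) : p < σ (.inl a) := by
  by_contra! h
  have h1 : 1 ≤ σ (.inl a) := (hσ.mapsTo (mem_coe.2 (mem_univ (.inl a)))).1
  have hk : σ (.inr ⟨σ (.inl a) - 1, by omega⟩) = σ (.inl a) := by
    rw [hB, Fin.val_mk]; omega
  exact Sum.inr_ne_inl (hσ.injOn (by simp) (by simp) hk)

lemma firstHit_disjSum_singleton {p : ℕ} {σ : α ⊕ Fin p → ℕ} (hA : ∀ a, p < σ (.inl a))
    (hB : ∀ k : Fin p, σ (.inr k) = k + 1) (X : Finset α) (k : Fin p) :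
    firstHit σ (X.disjSum {k}) = k + 1 := by
  rw [← hB k]
  refine firstHit_eq_of_forall_le (by simp) fun b hb => ?_
  rcases b with a | k'
  · have := hA a; have := hB k; omega
  · rw [inr_mem_disjSum, mem_singleton] at hb
    rw [hb]

end FirstHit

section Link

variable {V : Type*} [Fintype V] [DecidableEq V] (G : SimpleGraph V) [DecidableRel G.Adj]

lemma mem_image_toFinset_edgeFinset {X : Finset V} :
    X ∈ G.edgeFinset.image Sym2.toFinset ↔ ∃ i j, G.Adj i j ∧ X = {i, j} := by
  simp only [mem_image, SimpleGraph.mem_edgeFinset]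
  constructor
  · rintro ⟨z, hz, rfl⟩
    induction z using Sym2.ind with
    | _ i j => exact ⟨i, j, hz, Sym2.toFinset_mk_eq⟩
  · rintro ⟨i, j, hij, rfl⟩
    exact ⟨s(i, j), hij, Sym2.toFinset_mk_eq⟩

/-- The link of each `b_k` in `H_G`. -/
def hgLink : Finset (Finset V) :=
  univ \ insert ∅ (powersetCard 2 univ \ G.edgeFinset.image Sym2.toFinset)

lemma mem_hgLink {X : Finset V} :
    X ∈ hgLink G ↔ (∃ i, X = {i}) ∨ (∃ i j, G.Adj i j ∧ X = {i, j}) ∨ 3 ≤ #X := by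
  simp only [hgLink, mem_sdiff, mem_univ, true_and, mem_insert, mem_powersetCard, subset_univ,
    mem_image_toFinset_edgeFinset, not_or, not_and, not_not]
  constructor
  · rintro ⟨hne, hpair⟩
    have hpos := card_pos.2 (nonempty_iff_ne_empty.2 hne)
    obtain h | h | h : #X = 1 ∨ #X = 2 ∨ 3 ≤ #X := by omega
    · exact .inl (card_eq_one.1 h)
    · exact .inr (.inl (hpair h))
    · exact .inr (.inr h)
  · rintro (⟨i, rfl⟩ | ⟨i, j, hij, rfl⟩ | h)
    · simp
    · exact ⟨insert_ne_empty _ _, fun _ => ⟨i, j, hij, rfl⟩⟩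
    · refine ⟨?_, fun h2 => by omega⟩
      rintro rfl
      simp at h

lemma card_hgLink :
    #(hgLink G) = 2 ^ Fintype.card V - 1 - (Fintype.card V).choose 2 + #G.edgeFinset := by
  have hpairs : G.edgeFinset.image Sym2.toFinset ⊆ powersetCard 2 univ := fun X hX => by
    obtain ⟨i, j, hij, rfl⟩ := (mem_image_toFinset_edgeFinset G).1 hX
    simp [card_pair hij.ne]
  have hm : #G.edgeFinset ≤ (Fintype.card V).choose 2 := G.card_edgeFinset_le_card_choose_two
  have hC : (Fintype.card V).choose 2 < 2 ^ Fintype.card V := by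
    rcases (Fintype.card V).eq_zero_or_pos with h | h
    · simp [h]
    · exact Nat.choose_lt_two_pow _ _ h
  rw [hgLink, card_sdiff_of_subset (subset_univ _), card_univ, Fintype.card_finset,
    card_insert_of_notMem (by simp), card_sdiff_of_subset hpairs, card_powersetCard, card_univ,
    card_image_of_injective _ Sym2.toFinset_injective]
  omega

end Link

section HG

variable {n : ℕ} {G : SimpleGraph (Fin n)} [DecidableRel G.Adj]
  {E : Finset (Finset (Fin n ⊕ Fin 3))}

lemma IsHG.mem_iff (hHG : IsHG G E) {e : Finset (Fin n ⊕ Fin 3)} :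
    e ∈ E ↔ ∃ X ∈ hgLink G, ∃ k, e = X.disjSum {k} := by
  rw [hHG e]
  constructor
  · rintro (⟨i, k, rfl⟩ | ⟨i, j, k, hij, rfl⟩ | ⟨X, hX, k, rfl⟩)
    · exact ⟨{i}, (mem_hgLink G).2 (.inl ⟨i, rfl⟩), k, by ext (x | x) <;> simp⟩
    · exact ⟨{i, j}, (mem_hgLink G).2 (.inr (.inl ⟨i, j, hij, rfl⟩)), k,
        by ext (x | x) <;> simp⟩
    · exact ⟨X, (mem_hgLink G).2 (.inr (.inr hX)), k, by ext (x | x) <;> simp⟩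
  · rintro ⟨X, hX, k, rfl⟩
    rcases (mem_hgLink G).1 hX with ⟨i, rfl⟩ | ⟨i, j, hij, rfl⟩ | hX
    · exact .inl ⟨i, k, by ext (x | x) <;> simp⟩
    · exact .inr (.inl ⟨i, j, k, hij, by ext (x | x) <;> simp⟩)
    · exact .inr (.inr ⟨X, hX, k, by ext (x | x) <;> simp⟩)

lemma IsHG.coverage_succ (hHG : IsHG G E) {σ : Fin n ⊕ Fin 3 → ℕ}
    (hA : ∀ i, 3 < σ (.inl i)) (hB : ∀ k : Fin 3, σ (.inr k) = k + 1) (k : Fin 3) :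
    coverage E σ (k + 1) = #(hgLink G) := by
  have hfilter : E.filter (firstHit σ · = k + 1) = (hgLink G).image (·.disjSum {k}) := by
    ext e
    simp only [mem_filter, mem_image, hHG.mem_iff]
    constructor
    · rintro ⟨⟨X, hX, k', rfl⟩, hk⟩
      rw [firstHit_disjSum_singleton hA hB, add_left_inj, Fin.val_inj] at hk
      exact ⟨X, hX, hk ▸ rfl⟩
    · rintro ⟨X, hX, rfl⟩
      exact ⟨⟨X, hX, k, rfl⟩, firstHit_disjSum_singleton hA hB X k⟩
  rw [coverage, hfilter, card_image_of_injective _ fun X Y h => (disjSum_inj.1 h).1]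

end HG

theorem stmt_11_general (n : ℕ) (G : SimpleGraph (Fin n)) [DecidableRel G.Adj]
    (E : Finset (Finset (Fin n ⊕ Fin 3))) (hHG : IsHG G E)
    (σ : Fin n ⊕ Fin 3 → ℕ) (hσ : IsOrdering Finset.univ σ)
    (hB : ∀ k : Fin 3, σ (Sum.inr k) = (k : ℕ) + 1) :
    (∀ i, 1 ≤ i → i ≤ 3 →
      coverage E σ i = 2 ^ n - 1 - n.choose 2 + G.edgeFinset.card) ∧
    (∀ i, 4 ≤ i → coverage E σ i = 0) ∧
    totalCost E σ = 6 * (2 ^ n - 1 - n.choose 2 + G.edgeFinset.card) := by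
  have hA := hσ.lt_inl hB
  have hhit : ∀ e ∈ E, firstHit σ e ∈ Icc 1 3 := by
    intro e he
    obtain ⟨X, -, k, rfl⟩ := hHG.mem_iff.1 he
    rw [firstHit_disjSum_singleton hA hB, mem_Icc]
    omega
  have hcov : ∀ i, 1 ≤ i → i ≤ 3 →
      coverage E σ i = 2 ^ n - 1 - n.choose 2 + G.edgeFinset.card := by
    intro i h1 h3
    obtain ⟨k, rfl⟩ : ∃ k : Fin 3, i = k + 1 := ⟨⟨i - 1, by omega⟩, by rw [Fin.val_mk]; omega⟩
    rw [hHG.coverage_succ hA hB, card_hgLink, Fintype.card_fin]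
  refine ⟨hcov, fun i hi => coverage_eq_zero_of_notMem hhit (by rw [mem_Icc]; omega), ?_⟩
  rw [totalCost_eq_sum_mul_coverage hhit,
    sum_congr rfl fun i hi => by rw [hcov i (mem_Icc.1 hi).1 (mem_Icc.1 hi).2], ← sum_mul]
  rfl

/-- In `H_G` (with `|V(G)| = n` and `|E(G)| = m`), any ordering that places
`b₁, b₂, b₃` at positions `1, 2, 3` has effective coverages
`r(1) = r(2) = r(3) = 2ⁿ - 1 - C(n,2) + m`, `r(i) = 0` for `i ≥ 4`, and total cost
`6 (2ⁿ - 1 - C(n,2) + m)`. -/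
theorem stmt_11 (n : ℕ) (hn : 3 ≤ n) (G : SimpleGraph (Fin n)) [DecidableRel G.Adj]
    (E : Finset (Finset (Fin n ⊕ Fin 3))) (hHG : IsHG G E)
    (σ : Fin n ⊕ Fin 3 → ℕ) (hσ : IsOrdering Finset.univ σ)
    (hB : ∀ k : Fin 3, σ (Sum.inr k) = (k : ℕ) + 1) :
    (∀ i, 1 ≤ i → i ≤ 3 →
      coverage E σ i = 2 ^ n - 1 - n.choose 2 + G.edgeFinset.card) ∧
    (∀ i, 4 ≤ i → coverage E σ i = 0) ∧
    totalCost E σ = 6 * (2 ^ n - 1 - n.choose 2 + G.edgeFinset.card) :=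
  stmt_11_general n G E hHG σ hσ hB
end

section
/- For every integer n >= 3 there exists a hypergraph H on n+3 vertices with tau(H) = 3 and tauplus(H) = n; that is, the minimum set cover has size 3 but every optimal minimum sum set cover uses a set cover of size n. -/
open Finset

namespace Stmt13

open scoped Classical

variable {n : ℕ}

def rows (n : ℕ) : Finset (Fin (n+3)) :=
  {⟨n, by omega⟩, ⟨n+1, by omega⟩, ⟨n+2, by omega⟩}

def cols (n : ℕ) : Finset (Fin (n+3)) := univ.filter (fun v => v.val < n)

lemma mem_rows {v : Fin (n+3)} : v ∈ rows n ↔ n ≤ v.val := by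
  simp [rows, Fin.ext_iff]; omega

lemma mem_cols {v : Fin (n+3)} : v ∈ cols n ↔ v.val < n := by
  simp [cols]

lemma rows_card : (rows n).card = 3 := by
  rw [rows, card_insert_of_notMem (by simp [Fin.ext_iff] <;> omega),
    card_insert_of_notMem (by simp [Fin.ext_iff] <;> omega), card_singleton]

lemma cols_card : (cols n).card = n := by
  have h := Finset.card_filter_add_card_filter_not
    (s := (univ : Finset (Fin (n+3)))) (p := fun v => v.val < n)
  have h2 : (univ.filter (fun v : Fin (n+3) => ¬ v.val < n)) = rows n := by
    ext v; simp [mem_rows]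
  rw [h2] at h
  rw [rows_card] at h
  have h3 : (univ : Finset (Fin (n+3))).card = n + 3 := by simp
  rw [h3] at h
  unfold cols
  omega

def EE (n : ℕ) : Finset (Finset (Fin (n+3))) :=
  ((rows n) ×ˢ ((cols n).powerset.filter (fun S => S.Nonempty))).image
    (fun p => insert p.1 p.2)

lemma mem_EE {e : Finset (Fin (n+3))} :
    e ∈ EE n ↔ ∃ r S, r ∈ rows n ∧ S ⊆ cols n ∧ S.Nonempty ∧ e = insert r S := by
  simp only [EE, mem_image, mem_product, mem_filter, mem_powerset, Prod.exists]
  constructor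
  · rintro ⟨r, S, ⟨hr, hS, hne⟩, rfl⟩
    exact ⟨r, S, hr, hS, hne, rfl⟩
  · rintro ⟨r, S, hr, hS, hne, rfl⟩
    exact ⟨r, S, ⟨hr, hS, hne⟩, rfl⟩

lemma insert_inj {r r' : Fin (n+3)} {S S' : Finset (Fin (n+3))}
    (hr : r ∈ rows n) (hr' : r' ∈ rows n) (hS : S ⊆ cols n) (hS' : S' ⊆ cols n)
    (h : insert r S = insert r' S') : r = r' ∧ S = S' := by
  have hrow : ∀ v ∈ rows n, ∀ w ∈ cols n, v ≠ w := by
    intro v hv w hw hvw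
    rw [mem_rows] at hv; rw [mem_cols] at hw; omega
  have hrr : r = r' := by
    have : r ∈ insert r' S' := h ▸ mem_insert_self r S
    rcases mem_insert.1 this with h1 | h1
    · exact h1
    · exact absurd rfl (hrow r hr r (hS' h1))
  subst hrr
  refine ⟨rfl, ?_⟩
  ext c
  constructor
  · intro hc
    have : c ∈ insert r S' := h ▸ mem_insert_of_mem hc
    rcases mem_insert.1 this with h1 | h1
    · exact absurd h1.symm (hrow r hr c (hS hc))
    · exact h1
  · intro hc
    have : c ∈ insert r S := h ▸ mem_insert_of_mem hc
    rcases mem_insert.1 this with h1 | h1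
    · exact absurd h1.symm (hrow r hr c (hS' hc))
    · exact h1

section FH

variable {α : Type*} [DecidableEq α] {σ : α → ℕ} {e : Finset α}

lemma firstHit_le {v : α} (hv : v ∈ e) : firstHit σ e ≤ σ v :=
  Nat.sInf_le ⟨v, hv, rfl⟩

lemma exists_firstHit (he : e.Nonempty) : ∃ v ∈ e, firstHit σ e = σ v := by
  have hne : (σ '' ↑e).Nonempty := ⟨σ he.choose, he.choose, he.choose_spec, rfl⟩
  obtain ⟨v, hv, hveq⟩ := Nat.sInf_mem hne
  exact ⟨v, hv, hveq.symm⟩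

lemma le_firstHit_iff {t : ℕ} (he : e.Nonempty) :
    t ≤ firstHit σ e ↔ ∀ v ∈ e, t ≤ σ v := by
  constructor
  · intro h v hv
    exact le_trans h (firstHit_le hv)
  · intro h
    obtain ⟨v, hv, hveq⟩ := exists_firstHit (σ := σ) he
    rw [hveq]
    exact h v hv

lemma card_powerset_nonempty (C : Finset α) :
    (C.powerset.filter (fun S => S.Nonempty)).card = 2 ^ C.card - 1 := by
  have h : C.powerset.filter (fun S => S.Nonempty) = C.powerset.erase ∅ := by
    ext S
    simp [Finset.nonempty_iff_ne_empty, and_comm]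
  rw [h, card_erase_of_mem (empty_mem_powerset C), card_powerset]

end FH

-- counting the edges still uncovered at level t
lemma count_level (n : ℕ) (σ : Fin (n+3) → ℕ) (t : ℕ) :
    (EE n).filter (fun e => t ≤ firstHit σ e) =
      (((rows n).filter (fun r => t ≤ σ r)) ×ˢ
        ((((cols n).filter (fun c => t ≤ σ c)).powerset).filter (fun S => S.Nonempty))).image
        (fun p => insert p.1 p.2) := by
  ext e
  constructor
  · intro he
    rw [mem_filter] at he
    obtain ⟨heE, hFH⟩ := he
    obtain ⟨r, S, hr, hS, hne, rfl⟩ := mem_EE.1 heE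
    have hall := (le_firstHit_iff (insert_nonempty r S)).1 hFH
    rw [mem_image]
    refine ⟨(r, S), ?_, rfl⟩
    rw [mem_product]
    refine ⟨mem_filter.2 ⟨hr, hall r (mem_insert_self r S)⟩, ?_⟩
    rw [mem_filter, mem_powerset]
    exact ⟨fun c hc => mem_filter.2 ⟨hS hc, hall c (mem_insert_of_mem hc)⟩, hne⟩
  · intro he
    rw [mem_image] at he
    obtain ⟨⟨r, S⟩, hp, rfl⟩ := he
    rw [mem_product] at hp
    obtain ⟨hr0, hS0⟩ := hp
    have hr := mem_filter.1 hr0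
    have hS1 := mem_filter.1 hS0
    have hSsub := mem_powerset.1 hS1.1
    rw [mem_filter]
    refine ⟨mem_EE.2 ⟨r, S, hr.1, fun c hc => (mem_filter.1 (hSsub hc)).1, hS1.2, rfl⟩, ?_⟩
    rw [le_firstHit_iff (insert_nonempty r S)]
    intro v hv
    rcases mem_insert.1 hv with rfl | hv
    · exact hr.2
    · exact (mem_filter.1 (hSsub hv)).2

lemma count_level_card (n : ℕ) (σ : Fin (n+3) → ℕ) (t : ℕ) :
    ((EE n).filter (fun e => t ≤ firstHit σ e)).card =
      ((rows n).filter (fun r => t ≤ σ r)).card *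
        (2 ^ ((cols n).filter (fun c => t ≤ σ c)).card - 1) := by
  rw [count_level]
  rw [Finset.card_image_of_injOn]
  · rw [card_product, card_powerset_nonempty]
  · intro p hp q hq h
    rw [Finset.mem_coe, mem_product] at hp hq
    have hpr := mem_filter.1 hp.1
    have hqr := mem_filter.1 hq.1
    have hpS := mem_powerset.1 (mem_filter.1 hp.2).1
    have hqS := mem_powerset.1 (mem_filter.1 hq.2).1
    have h1 := insert_inj hpr.1 hqr.1
      (fun c hc => (mem_filter.1 (hpS hc)).1)
      (fun c hc => (mem_filter.1 (hqS hc)).1) h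
    exact Prod.ext h1.1 h1.2


lemma totalCost_levels (n : ℕ) (σ : Fin (n+3) → ℕ) (hσ : IsOrdering univ σ) :
    totalCost (EE n) σ =
      ∑ t ∈ Ioc 0 (n+3), ((EE n).filter (fun e => t ≤ firstHit σ e)).card := by
  have hcard : (univ : Finset (Fin (n+3))).card = n + 3 := by simp
  have hFHb : ∀ e ∈ EE n, 1 ≤ firstHit σ e ∧ firstHit σ e ≤ n + 3 := by
    intro e he
    obtain ⟨r, S, hr, hS, hne, rfl⟩ := mem_EE.1 he
    obtain ⟨v, hv, hveq⟩ := exists_firstHit (σ := σ) (insert_nonempty r S)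
    have := hσ.mapsTo (Finset.mem_coe.2 (mem_univ v))
    rw [hcard] at this
    rw [hveq]
    exact ⟨this.1, this.2⟩
  have key : ∀ e ∈ EE n,
      firstHit σ e = ∑ t ∈ Ioc 0 (n+3), if t ≤ firstHit σ e then 1 else 0 := by
    intro e he
    have h1 : (∑ t ∈ Ioc 0 (n+3), if t ≤ firstHit σ e then 1 else 0)
        = ((Ioc 0 (n+3)).filter (fun t => t ≤ firstHit σ e)).card := by
      rw [Finset.card_filter]
    have h2 : (Ioc 0 (n+3)).filter (fun t => t ≤ firstHit σ e) = Ioc 0 (firstHit σ e) := by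
      ext m
      simp only [mem_filter, mem_Ioc]
      have := (hFHb e he).2
      omega
    rw [h1, h2, Nat.card_Ioc]
    omega
  unfold totalCost
  rw [Finset.sum_congr rfl key, Finset.sum_comm]
  refine Finset.sum_congr rfl (fun t _ => ?_)
  rw [← Finset.card_filter]

lemma univ_filter_pos_card (n : ℕ) (σ : Fin (n+3) → ℕ) (hσ : IsOrdering univ σ)
    (t : ℕ) (ht : 1 ≤ t) :
    ((univ : Finset (Fin (n+3))).filter (fun v => t ≤ σ v)).card = n + 4 - t := by
  have hcard : (univ : Finset (Fin (n+3))).card = n + 3 := by simp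
  have hinj : Set.InjOn σ ↑(univ : Finset (Fin (n+3))) := hσ.injOn
  have himg : (univ : Finset (Fin (n+3))).image σ = Finset.Icc 1 (n+3) := by
    apply Finset.coe_injective
    rw [coe_image, Finset.coe_Icc]
    have h := hσ.image_eq
    rw [hcard] at h
    exact h
  have hf : ((univ : Finset (Fin (n+3))).filter (fun v => t ≤ σ v)).image σ
      = Finset.Icc t (n+3) := by
    have h1 : ((univ : Finset (Fin (n+3))).filter (fun v => t ≤ σ v)).image σ
        = ((univ : Finset (Fin (n+3))).image σ).filter (fun m => t ≤ m) :=
      (Finset.filter_image).symm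
    rw [h1, himg]
    ext m
    simp only [mem_filter, mem_Icc]
    omega
  have h2 : ((univ : Finset (Fin (n+3))).filter (fun v => t ≤ σ v)).card
      = (((univ : Finset (Fin (n+3))).filter (fun v => t ≤ σ v)).image σ).card := by
    rw [Finset.card_image_of_injOn (hinj.mono (by
      intro v hv
      simp))]
  rw [h2, hf, Nat.card_Icc]

lemma row_col_split (n : ℕ) (σ : Fin (n+3) → ℕ) (hσ : IsOrdering univ σ)
    (t : ℕ) (ht : 1 ≤ t) :
    ((rows n).filter (fun r => t ≤ σ r)).card
      + ((cols n).filter (fun c => t ≤ σ c)).card = n + 4 - t := by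
  have h := Finset.card_filter_add_card_filter_not
    (s := (univ : Finset (Fin (n+3))).filter (fun v => t ≤ σ v)) (p := fun v => n ≤ v.val)
  have e1 : ((univ : Finset (Fin (n+3))).filter (fun v => t ≤ σ v)).filter (fun v => n ≤ v.val)
      = (rows n).filter (fun r => t ≤ σ r) := by
    ext v; simp only [mem_filter, mem_univ, true_and, mem_rows]; tauto
  have e2 : ((univ : Finset (Fin (n+3))).filter (fun v => t ≤ σ v)).filter (fun v => ¬ n ≤ v.val)
      = (cols n).filter (fun c => t ≤ σ c) := by
    ext v; simp only [mem_filter, mem_univ, true_and, mem_cols]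
    constructor
    · rintro ⟨h1, h2⟩; exact ⟨by omega, h1⟩
    · rintro ⟨h1, h2⟩; exact ⟨h2, by omega⟩
  rw [e1, e2, univ_filter_pos_card n σ hσ t ht] at h
  exact h

lemma rows_image_filter_card (n : ℕ) (σ : Fin (n+3) → ℕ) (hσ : IsOrdering univ σ) (t : ℕ) :
    ((rows n).filter (fun r => t ≤ σ r)).card
      = (((rows n).image σ).filter (fun m => t ≤ m)).card := by
  have hinj : Set.InjOn σ ↑((rows n).filter (fun r => t ≤ σ r)) :=
    hσ.injOn.mono (by intro v hv; simp)
  rw [Finset.filter_image, Finset.card_image_of_injOn hinj]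


lemma geom_sum (K u : ℕ) : ∀ v, u ≤ v → v ≤ K →
    (∑ t ∈ Ioc u v, 2 ^ (K - t)) + 2 ^ (K - v) = 2 ^ (K - u) := by
  intro v
  induction v with
  | zero => intro h1 h2; interval_cases u; simp
  | succ v ih =>
    intro h1 h2
    rcases Nat.lt_or_ge u (v+1) with h | h
    · have hu : u ≤ v := by omega
      have hIoc : Ioc u (v+1) = insert (v+1) (Ioc u v) := by
        ext m; simp [mem_Ioc, mem_insert]; omega
      rw [hIoc, sum_insert (by simp [mem_Ioc])]
      have ihh := ih hu (by omega)
      have hpow : 2 ^ (K - v) = 2 ^ (K - (v+1)) + 2 ^ (K - (v+1)) := by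
        have : K - v = (K - (v+1)) + 1 := by omega
        rw [this, pow_succ]; ring
      omega
    · have : u = v + 1 := by omega
      subst this
      simp

lemma interval_sum (K u v c : ℕ) (huv : u ≤ v) (hvK : v ≤ K) :
    (∑ t ∈ Ioc u v, c * (2 ^ (K - t) - 1)) + c * (v - u) + c * 2 ^ (K - v)
      = c * 2 ^ (K - u) := by
  have h1 : ∀ t, c * (2 ^ (K - t) - 1) + c = c * 2 ^ (K - t) := by
    intro t
    obtain ⟨m, hm⟩ : ∃ m, 2 ^ (K - t) = m + 1 :=
      ⟨2 ^ (K - t) - 1, by have := Nat.one_le_two_pow (n := K - t); omega⟩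
    rw [hm, Nat.add_sub_cancel]; ring
  have h2 : (∑ t ∈ Ioc u v, c * (2 ^ (K - t) - 1)) + c * (v - u)
      = ∑ t ∈ Ioc u v, c * 2 ^ (K - t) := by
    have hcard : (Ioc u v).card = v - u := by rw [Nat.card_Ioc]
    calc (∑ t ∈ Ioc u v, c * (2 ^ (K - t) - 1)) + c * (v - u)
        = ∑ t ∈ Ioc u v, (c * (2 ^ (K - t) - 1) + c) := by
          rw [sum_add_distrib, sum_const, hcard, smul_eq_mul, mul_comm]
      _ = ∑ t ∈ Ioc u v, c * 2 ^ (K - t) := sum_congr rfl (fun t _ => h1 t)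
  rw [h2, ← mul_sum]
  have h3 := geom_sum K u v huv hvK
  calc c * (∑ t ∈ Ioc u v, 2 ^ (K - t)) + c * 2 ^ (K - v)
      = c * ((∑ t ∈ Ioc u v, 2 ^ (K - t)) + 2 ^ (K - v)) := by ring
    _ = c * 2 ^ (K - u) := by rw [h3]

lemma exists_sorted_triple {A : Finset ℕ} (hA : A.card = 3) :
    ∃ x y z, x < y ∧ y < z ∧ A = {x, y, z} := by
  obtain ⟨a, b, c, hab, hac, hbc, rfl⟩ := Finset.card_eq_three.1 hA
  rcases Nat.lt_or_ge a b with h1 | h1 <;> rcases Nat.lt_or_ge b c with h2 | h2 <;>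
    rcases Nat.lt_or_ge a c with h3 | h3
  · exact ⟨a, b, c, h1, h2, rfl⟩
  · omega
  · exact ⟨a, c, b, by omega, by omega, by ext t; simp; tauto⟩
  · exact ⟨c, a, b, by omega, by omega, by ext t; simp; tauto⟩
  · exact ⟨b, a, c, by omega, by omega, by ext t; simp; tauto⟩
  · exact ⟨b, c, a, by omega, by omega, by ext t; simp; tauto⟩
  · omega
  · exact ⟨c, b, a, by omega, by omega, by ext t; simp; tauto⟩

lemma triple_filter_card {x y z t : ℕ} (hxy : x < y) (hyz : y < z) :
    (({x, y, z} : Finset ℕ).filter (fun m => t ≤ m)).card =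
      if t ≤ x then 3 else if t ≤ y then 2 else if t ≤ z then 1 else 0 := by
  rcases le_or_gt t x with h1 | h1
  · rw [if_pos h1]
    have h : (({x, y, z} : Finset ℕ).filter (fun m => t ≤ m)) = {x, y, z} := by
      ext m; simp; omega
    rw [h, card_insert_of_notMem (by simp; omega), card_insert_of_notMem (by simp; omega),
      card_singleton]
  · rw [if_neg (by omega)]
    rcases le_or_gt t y with h2 | h2
    · rw [if_pos h2]
      have h : (({x, y, z} : Finset ℕ).filter (fun m => t ≤ m)) = {y, z} := by
        ext m; simp; omega
      rw [h, card_insert_of_notMem (by simp; omega), card_singleton]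
    · rw [if_neg (by omega)]
      rcases le_or_gt t z with h3 | h3
      · rw [if_pos h3]
        have h : (({x, y, z} : Finset ℕ).filter (fun m => t ≤ m)) = {z} := by
          ext m; simp; omega
        rw [h, card_singleton]
      · rw [if_neg (by omega)]
        have h : (({x, y, z} : Finset ℕ).filter (fun m => t ≤ m)) = ∅ := by
          ext m; simp; omega
        rw [h, card_empty]

lemma sum_Ioc_split (f : ℕ → ℕ) {a b c : ℕ} (h1 : a ≤ b) (h2 : b ≤ c) :
    ∑ t ∈ Ioc a c, f t = (∑ t ∈ Ioc a b, f t) + (∑ t ∈ Ioc b c, f t) := by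
  rw [← Finset.Ioc_union_Ioc_eq_Ioc h1 h2, Finset.sum_union]
  exact Finset.disjoint_left.2 (by intro m hm hm2; rw [mem_Ioc] at hm hm2; omega)

lemma cost_formula (n : ℕ) (σ : Fin (n+3) → ℕ) (hσ : IsOrdering univ σ)
    {x y z : ℕ} (hxy : x < y) (hyz : y < z) (hx1 : 1 ≤ x) (hz : z ≤ n+3)
    (hA : (rows n).image σ = {x, y, z}) :
    totalCost (EE n) σ + (x + y + z) + 2 ^ (n+3-z) = 3 * 2 ^ (n+1) + 2 ^ (n+1-x) := by
  have hx3 : x ≤ n+1 := by omega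
  have hy3 : y ≤ n+2 := by omega
  have hR : ∀ t, 1 ≤ t → ((rows n).filter (fun r => t ≤ σ r)).card
      = if t ≤ x then 3 else if t ≤ y then 2 else if t ≤ z then 1 else 0 := by
    intro t ht
    rw [rows_image_filter_card n σ hσ t, hA, triple_filter_card hxy hyz]
  -- the summand as a function of t on each interval
  have hterm : ∀ t, 1 ≤ t →
      ((EE n).filter (fun e => t ≤ firstHit σ e)).card =
      (if t ≤ x then 3 else if t ≤ y then 2 else if t ≤ z then 1 else 0)
        * (2 ^ ((n + 4 - t) - (if t ≤ x then 3 else if t ≤ y then 2 else if t ≤ z then 1 else 0)) - 1) := by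
    intro t ht
    rw [count_level_card, hR t ht]
    have h2 := row_col_split n σ hσ t ht
    rw [hR t ht] at h2
    have hcc : ((cols n).filter (fun c => t ≤ σ c)).card
        = (n + 4 - t) - (if t ≤ x then 3 else if t ≤ y then 2 else if t ≤ z then 1 else 0) := by
      omega
    rw [hcc]
  rw [totalCost_levels n σ hσ]
  rw [sum_Ioc_split _ (by omega : 0 ≤ x) (by omega : x ≤ n+3),
    sum_Ioc_split _ (by omega : x ≤ y) (by omega : y ≤ n+3),
    sum_Ioc_split _ (by omega : y ≤ z) (by omega : z ≤ n+3)]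
  have e1 : (∑ t ∈ Ioc 0 x, ((EE n).filter (fun e => t ≤ firstHit σ e)).card)
      = ∑ t ∈ Ioc 0 x, 3 * (2 ^ ((n+1) - t) - 1) := by
    refine sum_congr rfl (fun t htm => ?_)
    rw [mem_Ioc] at htm
    rw [hterm t (by omega), if_pos (by omega : t ≤ x)]
    have hcc : n + 4 - t - 3 = (n+1) - t := by omega
    rw [hcc]
  have e2 : (∑ t ∈ Ioc x y, ((EE n).filter (fun e => t ≤ firstHit σ e)).card)
      = ∑ t ∈ Ioc x y, 2 * (2 ^ ((n+2) - t) - 1) := by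
    refine sum_congr rfl (fun t htm => ?_)
    rw [mem_Ioc] at htm
    rw [hterm t (by omega), if_neg (by omega), if_pos (by omega : t ≤ y)]
    have hcc : n + 4 - t - 2 = (n+2) - t := by omega
    rw [hcc]
  have e3 : (∑ t ∈ Ioc y z, ((EE n).filter (fun e => t ≤ firstHit σ e)).card)
      = ∑ t ∈ Ioc y z, 1 * (2 ^ ((n+3) - t) - 1) := by
    refine sum_congr rfl (fun t htm => ?_)
    rw [mem_Ioc] at htm
    rw [hterm t (by omega), if_neg (by omega), if_neg (by omega), if_pos (by omega : t ≤ z)]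
    have hcc : n + 4 - t - 1 = (n+3) - t := by omega
    rw [hcc]
  have e4 : (∑ t ∈ Ioc z (n+3), ((EE n).filter (fun e => t ≤ firstHit σ e)).card) = 0 := by
    refine sum_eq_zero (fun t htm => ?_)
    rw [mem_Ioc] at htm
    rw [hterm t (by omega), if_neg (by omega), if_neg (by omega), if_neg (by omega)]
    simp
  rw [e1, e2, e3, e4]
  have i1 := interval_sum (n+1) 0 x 3 (by omega) (by omega)
  have i2 := interval_sum (n+2) x y 2 (by omega) (by omega)
  have i3 := interval_sum (n+3) y z 1 (by omega) (by omega)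
  have p1 : 2 ^ ((n+2) - x) = 2 * 2 ^ ((n+1) - x) := by
    have hh : (n+2) - x = ((n+1) - x) + 1 := by omega
    rw [hh, pow_succ]; ring
  have p2 : 2 ^ ((n+3) - y) = 2 * 2 ^ ((n+2) - y) := by
    have hh : (n+3) - y = ((n+2) - y) + 1 := by omega
    rw [hh, pow_succ]; ring
  have hsub : (n+1) - 0 = n+1 := by omega
  rw [hsub] at i1
  -- abstract the powers and finish with omega
  set P1 := 2 ^ ((n+1) - x) with hP1
  set P2 := 2 ^ ((n+2) - y) with hP2
  set P3 := 2 ^ ((n+3) - z) with hP3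
  set Q1 := 2 ^ ((n+2) - x) with hQ1
  set Q2 := 2 ^ ((n+3) - y) with hQ2
  set T := 2 ^ (n+1) with hT
  omega


end Stmt13


open Stmt13 in
/-- For every `n ≥ 3` there is a hypergraph on `n + 3` vertices whose minimum set
cover has size `3`, while the set cover associated with every optimal minimum sum
set cover solution (given by the largest first-hit position) has size `n`. -/
theorem stmt_13 (n : ℕ) (hn : 3 ≤ n) :
    ∃ E : Finset (Finset (Fin (n + 3))),
      (∀ e ∈ E, e.Nonempty) ∧
      (∃ S : Finset (Fin (n + 3)), IsSetCover E S ∧ S.card = 3) ∧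
      (∀ S : Finset (Fin (n + 3)), IsSetCover E S → 3 ≤ S.card) ∧
      ∀ σ : Fin (n + 3) → ℕ, IsOrdering Finset.univ σ →
        (∀ τ : Fin (n + 3) → ℕ, IsOrdering Finset.univ τ →
          totalCost E σ ≤ totalCost E τ) →
        E.sup (firstHit σ) = n := by
  classical
  refine ⟨EE n, ?_, ?_, ?_, ?_⟩
  · intro e he
    obtain ⟨r, S, hr, hS, hne, rfl⟩ := mem_EE.1 he
    exact insert_nonempty r S
  · refine ⟨rows n, ?_, rows_card⟩
    intro e he
    obtain ⟨r, S, hr, hS, hne, rfl⟩ := mem_EE.1 he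
    exact ⟨r, mem_inter.2 ⟨mem_insert_self r S, hr⟩⟩
  · intro S hS
    by_contra hcard
    push_neg at hcard
    obtain ⟨r, hr, hrS⟩ : ∃ r ∈ rows n, r ∉ S := by
      by_contra h
      push_neg at h
      have h2 := Finset.card_le_card (h : rows n ⊆ S)
      rw [rows_card] at h2; omega
    obtain ⟨c, hc, hcS⟩ : ∃ c ∈ cols n, c ∉ S := by
      by_contra h
      push_neg at h
      have h2 := Finset.card_le_card (h : cols n ⊆ S)
      rw [cols_card] at h2; omega
    have he : insert r {c} ∈ EE n :=
      mem_EE.2 ⟨r, {c}, hr, by simpa using hc, singleton_nonempty c, rfl⟩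
    obtain ⟨v, hv⟩ := hS _ he
    rw [mem_inter] at hv
    rcases mem_insert.1 hv.1 with rfl | hv1
    · exact hrS hv.2
    · rw [mem_singleton] at hv1; subst hv1; exact hcS hv.2
  · intro σ hσ hopt
    have hcardu : (univ : Finset (Fin (n+3))).card = n + 3 := by simp
    set σs : Fin (n+3) → ℕ := fun v => v.val + 1 with hσs
    have hstar : IsOrdering (univ : Finset (Fin (n+3))) σs := by
      rw [IsOrdering, hcardu]
      refine ⟨?_, ?_, ?_⟩
      · intro v _
        simp only [σs, Set.mem_Icc]
        omega
      · intro v _ w _ h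
        simp only [σs] at h
        exact Fin.ext (by omega)
      · intro m hm
        rw [Set.mem_Icc] at hm
        refine ⟨⟨m - 1, by omega⟩, by simp, ?_⟩
        simp only [σs]
        omega
    have himgs : (rows n).image σs = {n+1, n+2, n+3} := by
      simp [rows, σs]
    have hcosts := cost_formula n σs hstar (by omega : n+1 < n+2) (by omega : n+2 < n+3)
      (by omega) (by omega) himgs
    have h01 : n + 3 - (n + 3) = 0 := by omega
    have h02 : n + 1 - (n + 1) = 0 := by omega
    rw [h01, h02, pow_zero] at hcosts
    have hAcard : ((rows n).image σ).card = 3 := by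
      rw [Finset.card_image_of_injOn (hσ.injOn.mono (by intro v hv; simp)), rows_card]
    obtain ⟨x, y, z, hxy, hyz, hA⟩ := exists_sorted_triple hAcard
    have hbound : ∀ m ∈ (rows n).image σ, 1 ≤ m ∧ m ≤ n + 3 := by
      intro m hm
      obtain ⟨r, hr, rfl⟩ := mem_image.1 hm
      have h3 := hσ.mapsTo (Finset.mem_coe.2 (mem_univ r))
      rw [hcardu] at h3
      exact h3
    have hx1 : 1 ≤ x := (hbound x (by rw [hA]; simp)).1
    have hzz : z ≤ n + 3 := (hbound z (by rw [hA]; simp)).2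
    have hcost := cost_formula n σ hσ hxy hyz hx1 hzz hA
    have hle := hopt σs hstar
    have htop : x = n+1 ∧ y = n+2 ∧ z = n+3 := by
      by_contra hcon
      have hxn : x ≤ n := by omega
      have hpows : 2 ^ (n+3-z) ≤ 2 ^ (n+1-x) := Nat.pow_le_pow_right (by omega) (by omega)
      omega
    obtain ⟨hx, hy, hz⟩ := htop
    subst hx; subst hy; subst hz
    have hcolle : ∀ c ∈ cols n, σ c ≤ n := by
      intro c hc
      by_contra hgt
      push_neg at hgt
      have hmem := hσ.mapsTo (Finset.mem_coe.2 (mem_univ c))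
      rw [hcardu] at hmem
      rw [Set.mem_Icc] at hmem
      have hmem2 : σ c ∈ ({n+1, n+2, n+3} : Finset ℕ) := by
        simp only [mem_insert, mem_singleton]
        omega
      rw [← hA] at hmem2
      obtain ⟨r, hr, hrc⟩ := mem_image.1 hmem2
      have heq : r = c := hσ.injOn (Finset.mem_coe.2 (mem_univ r)) (Finset.mem_coe.2 (mem_univ c)) hrc
      subst heq
      rw [mem_rows] at hr; rw [mem_cols] at hc; omega
    have hrowge : ∀ r ∈ rows n, n + 1 ≤ σ r := by
      intro r hr
      have hmem : σ r ∈ ({n+1,n+2,n+3} : Finset ℕ) := by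
        rw [← hA]; exact mem_image_of_mem σ hr
      simp only [mem_insert, mem_singleton] at hmem
      omega
    apply le_antisymm
    · apply Finset.sup_le
      intro e he
      obtain ⟨r, S, hr, hS, hne, rfl⟩ := mem_EE.1 he
      obtain ⟨c, hc⟩ := hne
      exact le_trans (firstHit_le (mem_insert_of_mem hc)) (hcolle c (hS hc))
    · have hmemIcc : (n : ℕ) ∈ Set.Icc 1 ((univ : Finset (Fin (n+3))).card) := by
        rw [hcardu, Set.mem_Icc]
        omega
      obtain ⟨v, hv, hveq⟩ := hσ.surjOn hmemIcc
      have hvcol : v ∈ cols n := by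
        rw [mem_cols]
        by_contra h
        have hvr : v ∈ rows n := mem_rows.2 (by omega)
        have := hrowge v hvr
        omega
      have he : insert ⟨n, by omega⟩ {v} ∈ EE n :=
        mem_EE.2 ⟨⟨n, by omega⟩, {v}, mem_rows.2 (by simp), by simpa using hvcol,
          singleton_nonempty v, rfl⟩
      have hr0r : (⟨n, by omega⟩ : Fin (n+3)) ∈ rows n := mem_rows.2 (by simp)
      have hFH : firstHit σ (insert (⟨n, by omega⟩ : Fin (n+3)) {v}) = n := by
        apply le_antisymm
        · exact le_trans (firstHit_le (mem_insert_of_mem (mem_singleton_self v)))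
            (le_of_eq hveq)
        · rw [le_firstHit_iff (insert_nonempty _ _)]
          intro u hu
          rcases mem_insert.1 hu with rfl | hu
          · exact le_trans (by omega) (hrowge _ hr0r)
          · rw [mem_singleton] at hu; subst hu; omega
      calc n = firstHit σ (insert (⟨n, by omega⟩ : Fin (n+3)) {v}) := hFH.symm
        _ ≤ (EE n).sup (firstHit σ) := Finset.le_sup he
end

section
/- For any positive integers p, q, n with n >= 2, and G_{p,q} the disjoint union of p copies of B_q, the optimal minimum sum vertex cover cost phi(G_{p,q}) satisfies phi(G_{p,q}) > p^2 * n^{3q-1} * (n+2). -/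
open Finset

/-- Vertex set of the bipartite graph `B_q`: the left side `L` (first summand,
`2 n^q` vertices), the matching side `R₀` (second summand, `2 n^q` vertices), and
the groups `R₁, ..., R_q` (`⟨j, x⟩` encodes the `x`-th vertex of `R_{j+1}`). -/
abbrev BqV (n q : ℕ) := Fin (2 * n ^ q) ⊕ (Fin (2 * n ^ q) ⊕ Fin q × Fin (n ^ q))

/-- The base relation of `B_q`: the `a`-th vertex of `L` is matched to the `a`-th
vertex of `R₀`, and it is joined to a vertex `x` of `R_i` (`i = j + 1`) exactly when
they lie in corresponding parts: `L` is split into `n^{q-i}` parts of size `2 n^i`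
and `R_i` into `n^{q-i}` parts of size `n^i`. -/
def bqRel (n q : ℕ) : BqV n q → BqV n q → Bool
  | Sum.inl a, Sum.inr (Sum.inl b) => a.val == b.val
  | Sum.inl a, Sum.inr (Sum.inr (j, x)) =>
      a.val / (2 * n ^ (j.val + 1)) == x.val / n ^ (j.val + 1)
  | _, _ => false

/-- The bipartite graph `B_q` (with parameter `n`). -/
def Bq (n q : ℕ) : SimpleGraph (BqV n q) :=
  SimpleGraph.fromRel (fun u v => bqRel n q u v = true)

instance (n q : ℕ) : DecidableRel (Bq n q).Adj := fun u v =>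
  decidable_of_iff (u ≠ v ∧ (bqRel n q u v = true ∨ bqRel n q v u = true))
    (SimpleGraph.fromRel_adj (fun a b => bqRel n q a b = true) u v).symm

/-- The left side `L` of `B_q`, as a finset of vertices. -/
def LsetBq (n q : ℕ) : Finset (BqV n q) := Finset.univ.image Sum.inl

/-- A vertex cover of a graph: a set of vertices meeting every edge. -/
def IsVC {V : Type*} (G : SimpleGraph V) (S : Finset V) : Prop :=
  ∀ u v, G.Adj u v → u ∈ S ∨ v ∈ S

/-- An ordering of the vertices of a finite graph: a bijection onto `{1, ..., |V|}`. -/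
def IsGOrdering (V : Type*) [Fintype V] (σ : V → ℕ) : Prop :=
  Set.BijOn σ Set.univ (Set.Icc 1 (Fintype.card V))

/-- The minimum sum vertex cover cost of an ordering: every edge pays the position of
its first endpoint. -/
def gCost {V : Type*} [Fintype V] [DecidableEq V] (G : SimpleGraph V)
    [DecidableRel G.Adj] (σ : V → ℕ) : ℕ :=
  ∑ e ∈ G.edgeFinset, Sym2.lift ⟨fun u v => min (σ u) (σ v), fun u v => min_comm _ _⟩ e

/-- The disjoint union `G_{p,q}` of `p` copies of `B_q`. -/
def Gpq (p n q : ℕ) : SimpleGraph (Fin p × BqV n q) :=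
  SimpleGraph.fromRel (fun u v => u.1 = v.1 ∧ (Bq n q).Adj u.2 v.2)

instance (p n q : ℕ) : DecidableRel (Gpq p n q).Adj := fun u v =>
  decidable_of_iff
    (u ≠ v ∧ ((u.1 = v.1 ∧ (Bq n q).Adj u.2 v.2) ∨ (v.1 = u.1 ∧ (Bq n q).Adj v.2 u.2)))
    (SimpleGraph.fromRel_adj (fun a b => a.1 = b.1 ∧ (Bq n q).Adj a.2 b.2) u v).symm

/-!
Every vertex of `G_{p,q}` has degree at most `D = 2 n^q`, so the first `t` vertices of an ordering
cover at most `t D` edges, and at least `|E| - t D` edges have their first endpoint after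
position `t`. Summing these counts over `t < T` (a layer-cake decomposition of the cost) gives
`2 cost ≥ D T (T + 1)` whenever `T D ≤ |E|`. Summing degrees over the left side of `B_q` gives
`|E(G_{p,q})| = 2 p n^q (1 + n + ⋯ + n^q)`, so `T = p n^{q-1} (n + 1)` is admissible, and then
`n^q T (T + 1) > p² n^{3q-1} (n + 2)` because `(n + 1)² > n (n + 2)`.
-/

lemma sum_range_card_filter_lt_le {α : Type*} (s : Finset α) (f : α → ℕ) (T : ℕ) :
    ∑ t ∈ range T, #{a ∈ s | t < f a} ≤ ∑ a ∈ s, f a := by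
  simp_rw [card_filter]
  rw [sum_comm]
  refine sum_le_sum fun a _ => ?_
  rw [← card_filter]
  calc #{t ∈ range T | t < f a} ≤ #(range (f a)) :=
        card_le_card fun t ht => mem_range.2 (mem_filter.1 ht).2
    _ = f a := card_range _

lemma sum_range_sub_mul_two (T : ℕ) : (∑ t ∈ range T, (T - t)) * 2 = T * (T + 1) := by
  have h := sum_range_reflect (fun j => j) (T + 1)
  simp only [add_tsub_cancel_right, sum_range_succ, tsub_self, add_zero] at h
  rw [h, ← sum_range_succ, sum_range_id_mul_two, add_tsub_cancel_right, mul_comm]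

lemma card_filter_fin_div_eq {N m c : ℕ} (hm : 0 < m) (h : (c + 1) * m ≤ N) :
    #{x : Fin N | x.val / m = c} = m := by
  rw [card_filter, Fin.sum_univ_eq_sum_range (fun x => if x / m = c then 1 else 0), ← card_filter]
  have hIco : {x ∈ range N | x / m = c} = Ico (c * m) (c * m + m) := by
    ext x
    rw [add_mul, one_mul] at h
    simp only [mem_filter, mem_range, mem_Ico, Nat.div_eq_iff hm]
    omega
  simp [hIco]

lemma div_two_mul_add_one_mul_le {a m k N : ℕ} (hm : 0 < m) (hN : m * k = N) (ha : a < 2 * N) :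
    (a / (2 * m) + 1) * m ≤ N := by
  have : a / (2 * m) < k := (Nat.div_lt_iff_lt_mul (by omega)).2 (by subst hN; linarith)
  subst hN
  nlinarith

section Ordering

variable {V : Type*} [Fintype V]

def firstPos (σ : V → ℕ) : Sym2 V → ℕ :=
  Sym2.lift ⟨fun u v => min (σ u) (σ v), fun _ _ => min_comm _ _⟩

lemma gCost_eq_sum_firstPos [DecidableEq V] (G : SimpleGraph V) [DecidableRel G.Adj]
    (σ : V → ℕ) :
    gCost G σ = ∑ e ∈ G.edgeFinset, firstPos σ e := rfl

lemma IsGOrdering.card_filter_le {σ : V → ℕ} (hσ : IsGOrdering V σ) (s : ℕ) :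
    #{v | σ v ≤ s} ≤ s :=
  calc #{v | σ v ≤ s} ≤ #(Icc 1 s) :=
        card_le_card_of_injOn σ
          (fun v hv => mem_Icc.2 ⟨(hσ.1 (Set.mem_univ v)).1, (mem_filter.1 hv).2⟩)
          (hσ.2.1.mono (Set.subset_univ _))
    _ = s := by simp

lemma card_filter_firstPos_le [DecidableEq V] (G : SimpleGraph V) [DecidableRel G.Adj]
    {σ : V → ℕ} (hσ : IsGOrdering V σ) {D : ℕ} (hD : ∀ v, G.degree v ≤ D) (s : ℕ) :
    #{e ∈ G.edgeFinset | firstPos σ e ≤ s} ≤ s * D := by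
  have hcover : {e ∈ G.edgeFinset | firstPos σ e ≤ s} ⊆
      ({v | σ v ≤ s} : Finset V).biUnion (fun v => G.incidenceFinset v) := by
    intro e he
    obtain ⟨he, hs⟩ := mem_filter.1 he
    induction e using Sym2.ind with
    | _ u w =>
      have hadj : G.Adj u w := SimpleGraph.mem_edgeFinset.1 he
      rcases min_le_iff.1 hs with hu | hw
      · exact mem_biUnion.2 ⟨u, by simpa using hu,
          (G.mem_incidenceFinset u _).2 ⟨hadj, Sym2.mem_mk_left u w⟩⟩
      · exact mem_biUnion.2 ⟨w, by simpa using hw,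
          (G.mem_incidenceFinset w _).2 ⟨hadj, Sym2.mem_mk_right u w⟩⟩
  calc #{e ∈ G.edgeFinset | firstPos σ e ≤ s}
      ≤ #(({v | σ v ≤ s} : Finset V).biUnion fun v => G.incidenceFinset v) :=
        card_le_card hcover
    _ ≤ ∑ v ∈ {v | σ v ≤ s}, #(G.incidenceFinset v) := card_biUnion_le
    _ ≤ ∑ v ∈ {v | σ v ≤ s}, D :=
        sum_le_sum fun v _ => (G.card_incidenceFinset_eq_degree v).trans_le (hD v)
    _ ≤ s * D := by
        rw [sum_const, smul_eq_mul]
        exact Nat.mul_le_mul_right _ (hσ.card_filter_le s)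

theorem mul_mul_succ_mul_le_two_mul_gCost [DecidableEq V]
    (G : SimpleGraph V) [DecidableRel G.Adj] {σ : V → ℕ} (hσ : IsGOrdering V σ) {D T : ℕ}
    (hD : ∀ v, G.degree v ≤ D) (hT : T * D ≤ #G.edgeFinset) :
    T * (T + 1) * D ≤ 2 * gCost G σ := by
  have hlayer (t : ℕ) : (T - t) * D ≤ #{e ∈ G.edgeFinset | t < firstPos σ e} := by
    have hsplit := card_filter_add_card_filter_not (s := G.edgeFinset) (t < firstPos σ ·)
    have hearly := card_filter_firstPos_le G hσ hD t
    simp only [not_lt] at hsplit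
    rw [Nat.sub_mul]
    omega
  calc T * (T + 1) * D = 2 * ∑ t ∈ range T, (T - t) * D := by
        rw [← sum_mul, ← sum_range_sub_mul_two]; ring
    _ ≤ 2 * ∑ t ∈ range T, #{e ∈ G.edgeFinset | t < firstPos σ e} := by
        gcongr with t; exact hlayer t
    _ ≤ 2 * gCost G σ := by
        rw [gCost_eq_sum_firstPos]; gcongr; exact sum_range_card_filter_lt_le _ _ _

end Ordering

section Bq

variable {n q : ℕ}

lemma bqRel_self (v : BqV n q) : bqRel n q v v = false := by
  rcases v with _ | _ | _ <;> simp [bqRel]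

lemma bq_adj_iff {u v : BqV n q} : (Bq n q).Adj u v ↔ bqRel n q u v ∨ bqRel n q v u := by
  rw [Bq, SimpleGraph.fromRel_adj, and_iff_right_iff_imp]
  rintro (h | h) rfl <;> simp [bqRel_self] at h

lemma bq_adj_inl_iff {a : Fin (2 * n ^ q)} {w : BqV n q} :
    (Bq n q).Adj (Sum.inl a) w ↔ bqRel n q (Sum.inl a) w := by
  rw [bq_adj_iff]
  rcases w with _ | _ | _ <;> simp [bqRel]

lemma bq_isBipartiteWith : (Bq n q).IsBipartiteWith ↑(LsetBq n q) ↑(LsetBq n q)ᶜ := by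
  refine ⟨disjoint_coe.2 disjoint_compl_right, fun u v h => ?_⟩
  rw [bq_adj_iff] at h
  rcases u with _ | _ | _ <;> rcases v with _ | _ | _ <;> simp_all [LsetBq, bqRel]

lemma bq_degree_inl (hn : 0 < n) (a : Fin (2 * n ^ q)) :
    (Bq n q).degree (Sum.inl a) = ∑ j ∈ range (q + 1), n ^ j := by
  have hlevel (j : Fin q) : #{x : Fin (n ^ q) |
      a.val / (2 * n ^ (j.val + 1)) = x.val / n ^ (j.val + 1)} = n ^ (j.val + 1) := by
    simp_rw [eq_comm (a := a.val / _)]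
    exact card_filter_fin_div_eq (by positivity) (div_two_mul_add_one_mul_le (by positivity)
      (pow_mul_pow_sub n (Nat.succ_le_of_lt j.isLt)) a.isLt)
  rw [← SimpleGraph.card_neighborFinset_eq_degree, SimpleGraph.neighborFinset_eq_filter]
  simp only [bq_adj_inl_iff, card_filter, Fintype.sum_sum_type, Fintype.sum_prod_type, bqRel]
  simp only [Bool.false_eq_true, ↓reduceIte, sum_const_zero, beq_iff_eq, Fin.val_inj, sum_ite_eq,
    mem_univ, sum_boole, hlevel, Nat.cast_pow, Nat.cast_id, zero_add]
  rw [Fin.sum_univ_eq_sum_range (fun j => n ^ (j + 1)), sum_range_succ', pow_zero, add_comm]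

lemma bq_degree_le (hn : 2 ≤ n) (v : BqV n q) : (Bq n q).degree v ≤ 2 * n ^ q := by
  by_cases hv : v ∈ LsetBq n q
  · obtain ⟨a, -, rfl⟩ := mem_image.1 hv
    rw [bq_degree_inl (by omega), sum_range_succ, two_mul]
    exact Nat.add_le_add_right (Nat.geomSum_lt hn fun j hj => mem_range.1 hj).le _
  · calc (Bq n q).degree v ≤ #(LsetBq n q) :=
          SimpleGraph.isBipartiteWith_degree_le' bq_isBipartiteWith (mem_compl.2 hv)
      _ = 2 * n ^ q := by simp [LsetBq, card_image_of_injective _ Sum.inl_injective]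

lemma card_edgeFinset_bq (hn : 0 < n) :
    #(Bq n q).edgeFinset = 2 * n ^ q * ∑ j ∈ range (q + 1), n ^ j := by
  rw [← SimpleGraph.isBipartiteWith_sum_degrees_eq_card_edges bq_isBipartiteWith, LsetBq,
    sum_image fun _ _ _ _ h => Sum.inl_injective h]
  simp [bq_degree_inl hn]

end Bq

section Gpq

variable {p n q : ℕ}

lemma gpq_adj_iff {u v : Fin p × BqV n q} :
    (Gpq p n q).Adj u v ↔ u.1 = v.1 ∧ (Bq n q).Adj u.2 v.2 := by
  rw [Gpq, SimpleGraph.fromRel_adj]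
  constructor
  · rintro ⟨-, h | h⟩
    · exact h
    · exact ⟨h.1.symm, h.2.symm⟩
  · rintro ⟨h1, h2⟩
    exact ⟨fun h => h2.ne (congrArg Prod.snd h), Or.inl ⟨h1, h2⟩⟩

lemma gpq_degree (v : Fin p × BqV n q) : (Gpq p n q).degree v = (Bq n q).degree v.2 := by
  rw [← SimpleGraph.card_neighborFinset_eq_degree, ← SimpleGraph.card_neighborFinset_eq_degree]
  refine card_nbij' Prod.snd (fun w => (v.1, w)) ?_ ?_ ?_ ?_ <;> intro w hw <;>
    simp_all [gpq_adj_iff]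

lemma card_edgeFinset_gpq : #(Gpq p n q).edgeFinset = p * #(Bq n q).edgeFinset := by
  have hG := (Gpq p n q).sum_degrees_eq_twice_card_edges
  have hB := (Bq n q).sum_degrees_eq_twice_card_edges
  simp only [gpq_degree, Fintype.sum_prod_type, sum_const, card_univ, Fintype.card_fin,
    smul_eq_mul, hB] at hG
  linarith

end Gpq

/-- Lower bound on the minimum sum vertex cover cost of `G_{p,q}`:
every ordering has cost greater than `p² n^{3q-1} (n+2)`. -/
theorem stmt_17 (p n q : ℕ) (hp : 1 ≤ p) (hn : 2 ≤ n) (hq : 1 ≤ q) :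
    ∀ σ : Fin p × BqV n q → ℕ, IsGOrdering (Fin p × BqV n q) σ →
      p ^ 2 * n ^ (3 * q - 1) * (n + 2) < gCost (Gpq p n q) σ := by
  intro σ hσ
  obtain ⟨k, rfl⟩ : ∃ k, q = k + 1 := ⟨q - 1, by omega⟩
  set T := p * n ^ k * (n + 1)
  have hdeg (v : Fin p × BqV n (k + 1)) : (Gpq p n (k + 1)).degree v ≤ 2 * n ^ (k + 1) :=
    (gpq_degree v).trans_le (bq_degree_le hn v.2)
  have hedges : T * (2 * n ^ (k + 1)) ≤ #(Gpq p n (k + 1)).edgeFinset := by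
    have htop : n ^ k + n ^ (k + 1) ≤ ∑ j ∈ range (k + 2), n ^ j := by
      rw [sum_range_succ, sum_range_succ]; omega
    rw [card_edgeFinset_gpq, card_edgeFinset_bq (by omega)]
    calc T * (2 * n ^ (k + 1)) = p * (2 * n ^ (k + 1) * (n ^ k + n ^ (k + 1))) := by ring
      _ ≤ _ := by gcongr
  have hcost := mul_mul_succ_mul_le_two_mul_gCost _ hσ hdeg hedges
  have hpos : 0 < p ^ 2 * n ^ (3 * k + 1) := Nat.mul_pos (pow_pos hp _) (pow_pos (by omega) _)
  calc p ^ 2 * n ^ (3 * (k + 1) - 1) * (n + 2)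
      < p ^ 2 * n ^ (3 * k + 2) * (n + 2) + p ^ 2 * n ^ (3 * k + 1) := by
        rw [show 3 * (k + 1) - 1 = 3 * k + 2 by omega]; omega
    _ = T * T * n ^ (k + 1) := by ring
    _ ≤ T * (T + 1) * n ^ (k + 1) := by gcongr; omega
    _ ≤ gCost (Gpq p n (k + 1)) σ := by linarith
end
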